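/- arXiv:1307.1852 — 9 statements merged into one kernel-verified Lean document; each statement's English description precedes it below -/
import Mathlib

section
/- Let G : M^{m×d} → [0,∞] be Borel measurable with effective domain 𝔾. Suppose 0 ∈ int(𝔾) and there exists C > 0 such that G(tξ + (1−t)ζ) ≤ C(1 + G(ξ) + G(ζ)) for all ξ, ζ and t ∈ (0,1). Then for every t ∈ [0,1) and every ξ in the closure of 𝔾, the matrix tξ belongs to int(𝔾). -/
/-!
The growth bound `G (t • ξ + (1 - t) • ζ) ≤ C * (1 + G ξ + G ζ)` with `C` finite makes the
effective domain of `G` convex. For a convex set, the segment from a point of the closure to an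
interior point lies in the interior except for its closure endpoint; apply this to the segment
from `ξ` to `0`.
-/

open MeasureTheory ENNReal

noncomputable instance {m d : ℕ} : MeasurableSpace (Matrix (Fin m) (Fin d) ℝ) := borel _
instance {m d : ℕ} : BorelSpace (Matrix (Fin m) (Fin d) ℝ) := ⟨rfl⟩

theorem convex_setOf_lt_top_of_le_mul {E : Type*} [AddCommGroup E] [Module ℝ E]
    {G : E → ℝ≥0∞} {C : ℝ≥0∞} (hCtop : C ≠ ⊤)
    (hG : ∀ ξ ζ : E, ∀ t ∈ Set.Ioo (0 : ℝ) 1, G (t • ξ + (1 - t) • ζ) ≤ C * (1 + G ξ + G ζ)) :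
    Convex ℝ {ξ | G ξ < ⊤} := by
  refine convex_iff_forall_pos.mpr fun ξ hξ ζ hζ a b ha hb hab => ?_
  obtain rfl : b = 1 - a := by linarith
  calc G (a • ξ + (1 - a) • ζ) ≤ C * (1 + G ξ + G ζ) := hG ξ ζ a ⟨ha, by linarith⟩
    _ < ⊤ := mul_lt_top hCtop.lt_top (add_lt_top.mpr ⟨add_lt_top.mpr ⟨one_lt_top, hξ⟩, hζ⟩)

theorem smul_closure_mem_interior_general {m d : ℕ}
    (G : Matrix (Fin m) (Fin d) ℝ → ℝ≥0∞)
    (hzero : (0 : Matrix (Fin m) (Fin d) ℝ) ∈ interior {ξ | G ξ < ⊤})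
    (C : ℝ≥0∞) (hCtop : C ≠ ⊤)
    (hG : ∀ ξ ζ : Matrix (Fin m) (Fin d) ℝ, ∀ t ∈ Set.Ioo (0:ℝ) 1,
      G (t • ξ + (1 - t) • ζ) ≤ C * (1 + G ξ + G ζ)) :
    ∀ t ∈ Set.Ico (0:ℝ) 1, ∀ ξ ∈ closure {ξ : Matrix (Fin m) (Fin d) ℝ | G ξ < ⊤},
      t • ξ ∈ interior {ξ : Matrix (Fin m) (Fin d) ℝ | G ξ < ⊤} := by
  intro t ht ξ hξ
  have hmem := (convex_setOf_lt_top_of_le_mul hCtop hG).combo_closure_interior_mem_interior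
    hξ hzero ht.1 (sub_pos.mpr ht.2) (add_sub_cancel t 1)
  simpa using hmem

/-- If `0 ∈ int(𝔾)` and `G(tξ+(1−t)ζ) ≤ C(1+G(ξ)+G(ζ))`, then for
every `t ∈ [0,1)` and every `ξ ∈ cl(𝔾)`, the matrix `tξ` belongs to `int(𝔾)`. -/
theorem smul_closure_mem_interior {m d : ℕ}
    (G : Matrix (Fin m) (Fin d) ℝ → ℝ≥0∞) (hGmeas : Measurable G)
    (hzero : (0 : Matrix (Fin m) (Fin d) ℝ) ∈ interior {ξ | G ξ < ⊤})
    (C : ℝ≥0∞) (hC : 0 < C) (hCtop : C ≠ ⊤)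
    (hG : ∀ ξ ζ : Matrix (Fin m) (Fin d) ℝ, ∀ t ∈ Set.Ioo (0:ℝ) 1,
      G (t • ξ + (1 - t) • ζ) ≤ C * (1 + G ξ + G ζ)) :
    ∀ t ∈ Set.Ico (0:ℝ) 1, ∀ ξ ∈ closure {ξ : Matrix (Fin m) (Fin d) ℝ | G ξ < ⊤},
      t • ξ ∈ interior {ξ : Matrix (Fin m) (Fin d) ℝ | G ξ < ⊤} :=
  smul_closure_mem_interior_general G hzero C hCtop hG
end

section
/- Let G : M^{m×d} → [0,∞] be Borel measurable with effective domain 𝔾. Suppose 0 ∈ int(𝔾) and there exists C > 0 such that G(tξ + (1−t)ζ) ≤ C(1 + G(ξ) + G(ζ)) for all ξ, ζ and t ∈ (0,1). Then int(𝔾) equals the union over t ∈ [0,1) of the sets t·cl(𝔾). -/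
/-! The growth bound keeps `G` finite on segments between points of `𝔾`, so `𝔾` is convex. For a
convex set with `0` in its interior, the open segment from `0` to a point of the closure lies in
the interior, which gives `t • cl 𝔾 ⊆ int 𝔾` for `t < 1`. Conversely, an interior point `x` has
`c • x ∈ 𝔾` for some `c > 1` by continuity of scaling, and `x = c⁻¹ • (c • x)`. -/

open MeasureTheory ENNReal Pointwise

open Set Filter Topology

theorem convex_setOf_lt_top_of_combo_le_mul {E : Type*} [AddCommGroup E] [Module ℝ E]
    {G : E → ℝ≥0∞} {C : ℝ≥0∞} (hC : C ≠ ⊤)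
    (hG : ∀ ξ ζ : E, ∀ t ∈ Ioo (0 : ℝ) 1, G (t • ξ + (1 - t) • ζ) ≤ C * (1 + G ξ + G ζ)) :
    Convex ℝ {ξ | G ξ < ⊤} := by
  refine convex_iff_forall_pos.2 fun x hx y hy a b ha hb hab => ?_
  obtain rfl : b = 1 - a := by linarith
  have hfin : C * (1 + G x + G y) < ⊤ :=
    mul_lt_top hC.lt_top (add_lt_top.2 ⟨add_lt_top.2 ⟨one_lt_top, hx⟩, hy⟩)
  exact (hG x y a ⟨ha, by linarith⟩).trans_lt hfin

section TopologicalVectorSpace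

variable {E : Type*} [AddCommGroup E] [Module ℝ E] [TopologicalSpace E]

theorem exists_one_lt_smul_mem_of_mem_interior [ContinuousSMul ℝ E] {s : Set E} {x : E}
    (hx : x ∈ interior s) : ∃ c : ℝ, 1 < c ∧ c • x ∈ s := by
  have hnear : ∀ᶠ c : ℝ in 𝓝 1, c • x ∈ s :=
    ((continuous_id.smul continuous_const).tendsto' (1 : ℝ) x (one_smul ℝ x)).eventually
      (mem_interior_iff_mem_nhds.1 hx)
  have hgt : ∀ᶠ c in 𝓝[>] (1 : ℝ), 1 < c := eventually_mem_nhdsWithin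
  exact (hgt.and (hnear.filter_mono nhdsWithin_le_nhds)).exists

theorem interior_subset_iUnion_smul_closure [ContinuousSMul ℝ E] (s : Set E) :
    interior s ⊆ ⋃ t ∈ Ico (0 : ℝ) 1, t • closure s := by
  intro x hx
  obtain ⟨c, hc, hcx⟩ := exists_one_lt_smul_mem_of_mem_interior hx
  refine mem_iUnion₂.2
    ⟨c⁻¹, ⟨by positivity, inv_lt_one_of_one_lt₀ hc⟩, c • x, subset_closure hcx, ?_⟩
  simp [smul_smul, (zero_lt_one.trans hc).ne']

theorem Convex.iUnion_smul_closure_subset_interior [IsTopologicalAddGroup E]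
    [ContinuousConstSMul ℝ E] {s : Set E} (hs : Convex ℝ s) (h0 : (0 : E) ∈ interior s) :
    ⋃ t ∈ Ico (0 : ℝ) 1, t • closure s ⊆ interior s := by
  refine iUnion₂_subset fun t ⟨ht0, ht1⟩ => ?_
  rintro _ ⟨y, hy, rfl⟩
  simpa using hs.combo_interior_closure_mem_interior h0 hy (sub_pos.2 ht1) ht0 (sub_add_cancel 1 t)

theorem Convex.interior_eq_iUnion_smul_closure [IsTopologicalAddGroup E] [ContinuousSMul ℝ E]
    {s : Set E} (hs : Convex ℝ s) (h0 : (0 : E) ∈ interior s) :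
    interior s = ⋃ t ∈ Ico (0 : ℝ) 1, t • closure s :=
  (interior_subset_iUnion_smul_closure s).antisymm (hs.iUnion_smul_closure_subset_interior h0)

end TopologicalVectorSpace

/-- If `0 ∈ int(𝔾)` and `G(tξ+(1−t)ζ) ≤ C(1+G(ξ)+G(ζ))`, then
`int(𝔾) = ⋃_{t ∈ [0,1)} t · cl(𝔾)`. -/
theorem interior_eq_iUnion_smul_closure {m d : ℕ}
    (G : Matrix (Fin m) (Fin d) ℝ → ℝ≥0∞)
    (hzero : (0 : Matrix (Fin m) (Fin d) ℝ) ∈ interior {ξ | G ξ < ⊤})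
    (C : ℝ≥0∞) (hCtop : C ≠ ⊤)
    (hG : ∀ ξ ζ : Matrix (Fin m) (Fin d) ℝ, ∀ t ∈ Set.Ioo (0:ℝ) 1,
      G (t • ξ + (1 - t) • ζ) ≤ C * (1 + G ξ + G ζ)) :
    interior {ξ : Matrix (Fin m) (Fin d) ℝ | G ξ < ⊤}
      = ⋃ t ∈ Set.Ico (0:ℝ) 1, t • closure {ξ : Matrix (Fin m) (Fin d) ℝ | G ξ < ⊤} :=
  (convex_setOf_lt_top_of_combo_le_mul hCtop hG).interior_eq_iUnion_smul_closure hzero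
end

section
/- Let L : M^{m×d} → [0,∞] be Borel measurable. Suppose 0 ∈ int(dom L) and there exists C > 0 such that L(tξ + (1−t)ζ) ≤ C(1 + L(ξ) + L(ζ)) for all ξ, ζ ∈ M^{m×d} and t ∈ (0,1). Then there exists ρ₀ > 0 such that sup over the closed ball of radius ρ₀ centered at 0 of L is finite. -/
/-!
Since `L` is finite near `0`, so is `M ξ = max (L ξ) (L (-ξ))`, and a countable union argument
gives a sublevel set `S = {M ≤ n}` of positive Haar measure. By Steinhaus' theorem `S - S` is a
neighbourhood of `0`, so every small `ξ` is a midpoint of some `x` and `-y` with `x, y ∈ S`; the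
quasiconvexity inequality at `t = 1/2` then bounds `L ξ` by `C (1 + 2n)`.
-/

open MeasureTheory ENNReal

attribute [local instance] Matrix.frobeniusNormedAddCommGroup

open Filter Topology Pointwise

theorem exists_nat_measure_setOf_le_pos {α : Type*} [MeasurableSpace α]
    (μ : Measure α) {f : α → ℝ≥0∞} (h : μ {x | f x < ∞} ≠ 0) :
    ∃ n : ℕ, 0 < μ {x | f x ≤ n} := by
  refine exists_measure_pos_of_not_measure_iUnion_null
    (ne_bot_of_le_ne_bot h (measure_mono ?_))
  intro x hx
  obtain ⟨n, hn⟩ := ENNReal.exists_nat_gt hx.ne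
  exact Set.mem_iUnion.2 ⟨n, hn.le⟩

section

variable {E : Type*} [NormedAddCommGroup E] [NormedSpace ℝ E]

theorem midpoint_neg_eq_two_inv_smul_sub (x y : E) :
    midpoint ℝ x (-y) = (2 : ℝ)⁻¹ • (x - y) := by
  rw [midpoint_eq_smul_add, invOf_eq_inv, sub_eq_add_neg]

variable [FiniteDimensional ℝ E] [MeasurableSpace E] [BorelSpace E]

theorem eventually_two_smul_mem_sub_of_addHaar_pos {S : Set E} (hS : MeasurableSet S)
    (hpos : 0 < (Measure.addHaar : Measure E) S) :
    ∀ᶠ ξ in 𝓝 (0 : E), (2 : ℝ) • ξ ∈ S - S := by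
  have hcont : Tendsto (fun ξ : E ↦ (2 : ℝ) • ξ) (𝓝 0) (𝓝 0) := by
    simpa using (tendsto_id (x := 𝓝 (0 : E))).const_smul (2 : ℝ)
  exact hcont (Measure.addHaar.sub_mem_nhds_zero_of_addHaar_pos S hS hpos)

theorem eventually_le_of_midpoint_le {L : E → ℝ≥0∞} (hLmeas : Measurable L)
    (hfin : ∀ᶠ ξ in 𝓝 (0 : E), L ξ < ∞) {C : ℝ≥0∞} (hCtop : C ≠ ∞)
    (hL : ∀ ξ ζ, L (midpoint ℝ ξ ζ) ≤ C * (1 + L ξ + L ζ)) :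
    ∃ K < ∞, ∀ᶠ ξ in 𝓝 (0 : E), L ξ ≤ K := by
  set M : E → ℝ≥0∞ := fun ξ ↦ max (L ξ) (L (-ξ))
  have hMfin : ∀ᶠ ξ in 𝓝 (0 : E), M ξ < ∞ := by
    have hneg : ∀ᶠ ξ in 𝓝 (0 : E), L (-ξ) < ∞ := by
      simpa using (continuous_neg.tendsto' (0 : E) 0 neg_zero).eventually hfin
    filter_upwards [hfin, hneg] with ξ h₁ h₂ using max_lt h₁ h₂
  obtain ⟨n, hn⟩ := exists_nat_measure_setOf_le_pos Measure.addHaar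
    (Measure.measure_pos_of_mem_nhds _ hMfin).ne'
  have hSmeas : MeasurableSet {ξ | M ξ ≤ n} :=
    (hLmeas.max (hLmeas.comp measurable_neg)) measurableSet_Iic
  refine ⟨C * (1 + n + n), mul_lt_top hCtop.lt_top (by simp [add_lt_top]), ?_⟩
  filter_upwards [eventually_two_smul_mem_sub_of_addHaar_pos hSmeas hn]
    with ξ ⟨x, hx, y, hy, hxy⟩
  replace hxy : x - y = (2 : ℝ) • ξ := hxy
  have hξ : ξ = midpoint ℝ x (-y) := by
    rw [midpoint_neg_eq_two_inv_smul_sub, hxy, smul_smul]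
    norm_num
  calc L ξ ≤ C * (1 + L x + L (-y)) := hξ ▸ hL x (-y)
    _ ≤ C * (1 + n + n) := by
      gcongr
      exacts [(le_max_left _ _).trans hx, (le_max_right _ _).trans hy]

end

attribute [local instance] Matrix.frobeniusNormedSpace

theorem bounded_on_closed_ball_general {m d : ℕ}
    (L : Matrix (Fin m) (Fin d) ℝ → ℝ≥0∞) (hLmeas : Measurable L)
    (hzero : (0 : Matrix (Fin m) (Fin d) ℝ) ∈ interior {ξ | L ξ < ⊤})
    (C : ℝ≥0∞) (hCtop : C ≠ ⊤)
    (hL : ∀ ξ ζ : Matrix (Fin m) (Fin d) ℝ, ∀ t ∈ Set.Ioo (0:ℝ) 1,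
      L (t • ξ + (1 - t) • ζ) ≤ C * (1 + L ξ + L ζ)) :
    ∃ ρ₀ : ℝ, 0 < ρ₀ ∧
      (⨆ ξ ∈ Metric.closedBall (0 : Matrix (Fin m) (Fin d) ℝ) ρ₀, L ξ) < ⊤ := by
  -- The Frobenius norm induces the product topology, whose Borel sets are the given ones.
  have : @BorelSpace (Matrix (Fin m) (Fin d) ℝ)
      (@UniformSpace.toTopologicalSpace _ PseudoMetricSpace.toUniformSpace) _ := ⟨rfl⟩
  obtain ⟨K, hK, hbound⟩ :=
    eventually_le_of_midpoint_le hLmeas (mem_interior_iff_mem_nhds.1 hzero) hCtop fun ξ ζ ↦ by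
      simpa [midpoint_eq_smul_add, smul_add, show (1 : ℝ) - 2⁻¹ = 2⁻¹ by norm_num] using
        hL ξ ζ (1 / 2) ⟨by norm_num, by norm_num⟩
  obtain ⟨ρ, hρ, hρK⟩ := Metric.nhds_basis_closedBall.eventually_iff.1 hbound
  refine ⟨ρ, hρ, lt_of_le_of_lt ?_ hK⟩
  exact iSup₂_le fun ξ hξ ↦ hρK hξ

/-- If `L : M^{m×d} → [0,∞]` is Borel measurable, `0 ∈ int(dom L)` and
`L(tξ+(1−t)ζ) ≤ C(1+L(ξ)+L(ζ))`, then `L` is bounded on some closed ball around `0`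
(with respect to the Frobenius norm). -/
theorem bounded_on_closed_ball {m d : ℕ}
    (L : Matrix (Fin m) (Fin d) ℝ → ℝ≥0∞) (hLmeas : Measurable L)
    (hzero : (0 : Matrix (Fin m) (Fin d) ℝ) ∈ interior {ξ | L ξ < ⊤})
    (C : ℝ≥0∞) (hC : 0 < C) (hCtop : C ≠ ⊤)
    (hL : ∀ ξ ζ : Matrix (Fin m) (Fin d) ℝ, ∀ t ∈ Set.Ioo (0:ℝ) 1,
      L (t • ξ + (1 - t) • ζ) ≤ C * (1 + L ξ + L ζ)) :
    ∃ ρ₀ : ℝ, 0 < ρ₀ ∧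
      (⨆ ξ ∈ Metric.closedBall (0 : Matrix (Fin m) (Fin d) ℝ) ρ₀, L ξ) < ⊤ :=
  bounded_on_closed_ball_general L hLmeas hzero C hCtop hL
end

section
/- Let U ⊂ ℝ^d be open and L : U × M^{m×d} → [0,∞] be ru-usc with respect to a ∈ L¹_loc(U;(0,∞)). Suppose for every x ∈ U and every t ∈ (0,1), t·cl(𝕃_x) ⊂ 𝕃_x, where 𝕃_x is the effective domain of L(x,·). Then for every x ∈ U and ξ ∈ cl(𝕃_x), the limit lim_{t→1⁻} L(x,tξ) exists (i.e., liminf_{t→1⁻} L(x,tξ) = limsup_{t→1⁻} L(x,tξ)). -/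
open MeasureTheory ENNReal

open Filter

/-- The quantity `Δ_L^a(t)` of the paper, valued in `EReal`. -/
noncomputable def Delta {d m n : ℕ} (U : Set (EuclideanSpace ℝ (Fin d)))
    (L : EuclideanSpace ℝ (Fin d) → Matrix (Fin m) (Fin n) ℝ → ℝ≥0∞)
    (a : EuclideanSpace ℝ (Fin d) → ℝ) (t : ℝ) : EReal :=
  ⨆ x ∈ U, ⨆ ξ ∈ {ξ : Matrix (Fin m) (Fin n) ℝ | L x ξ < ⊤},
    ((L x (t • ξ) : EReal) - (L x ξ : EReal)) / ((a x : EReal) + (L x ξ : EReal))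


lemma coe_ennreal_fin (x : ℝ≥0∞) (hx : x ≠ ⊤) : (x : EReal) = ((x.toReal : ℝ) : EReal) := by
  conv_lhs => rw [← ENNReal.ofReal_toReal hx]
  rw [EReal.coe_ennreal_ofReal, max_eq_left ENNReal.toReal_nonneg]

open Pointwise
/-- if `L` is ru-usc w.r.t. `a` and `t·cl(𝕃_x) ⊂ 𝕃_x` for all `x ∈ U`,
`t ∈ (0,1)`, then for every `x ∈ U` and `ξ ∈ cl(𝕃_x)` the limit `lim_{t→1⁻} L(x,tξ)`
exists, i.e. the liminf and limsup as `t → 1⁻` coincide. -/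
theorem ru_usc_radial_limit_exists {d m n : ℕ}
    (U : Set (EuclideanSpace ℝ (Fin d))) (hU : IsOpen U)
    (L : EuclideanSpace ℝ (Fin d) → Matrix (Fin m) (Fin n) ℝ → ℝ≥0∞)
    (hLmeas : Measurable (Function.uncurry L))
    (a : EuclideanSpace ℝ (Fin d) → ℝ) (ha : ∀ x, 0 < a x)
    (haint : LocallyIntegrableOn a U)
    (hru : limsup (Delta U L a) (nhdsWithin 1 (Set.Iio 1)) ≤ (0 : EReal))
    (hdom : ∀ x ∈ U, ∀ t ∈ Set.Ioo (0:ℝ) 1,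
      t • closure {ξ : Matrix (Fin m) (Fin n) ℝ | L x ξ < ⊤}
        ⊆ {ξ : Matrix (Fin m) (Fin n) ℝ | L x ξ < ⊤}) :
    ∀ x ∈ U, ∀ ξ ∈ closure {ξ : Matrix (Fin m) (Fin n) ℝ | L x ξ < ⊤},
      liminf (fun t : ℝ => L x (t • ξ)) (nhdsWithin 1 (Set.Iio 1))
        = limsup (fun t : ℝ => L x (t • ξ)) (nhdsWithin 1 (Set.Iio 1)) := by
  intro x hx ξ hξ
  set F : Filter ℝ := nhdsWithin 1 (Set.Iio 1) with hF
  set g : ℝ → ℝ≥0∞ := fun t : ℝ => L x (t • ξ) with hg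
  -- finiteness of the radial function on (0,1)
  have hmem : ∀ t ∈ Set.Ioo (0:ℝ) 1, g t < ⊤ := by
    intro t ht
    exact hdom x hx t ht ⟨ξ, hξ, rfl⟩
  set l : ℝ≥0∞ := liminf g F with hl
  refine le_antisymm liminf_le_limsup ?_
  by_cases hltop : l = ⊤
  · rw [hltop]; exact le_top
  -- KEY inequality
  have KEY : ∀ ε : ℝ, 0 < ε →
      limsup g F ≤ (l + ENNReal.ofReal ε)
        + ENNReal.ofReal ε * (ENNReal.ofReal (a x) + (l + ENNReal.ofReal ε)) := by
    intro ε hε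
    -- Delta is eventually < ε
    have hev : ∀ᶠ s in F, Delta U L a s < (ε : EReal) := by
      refine eventually_lt_of_limsup_lt (lt_of_le_of_lt hru ?_)
      exact_mod_cast hε
    obtain ⟨c, hc, hsub⟩ := mem_nhdsLT_iff_exists_Ioo_subset.mp hev
    -- frequently g t is close to the liminf
    have hfreq : ∃ᶠ t in F, g t < l + ENNReal.ofReal ε := by
      exact frequently_lt_of_liminf_lt (by isBoundedDefault)
        (ENNReal.lt_add_right hltop (ENNReal.ofReal_pos.2 hε).ne')
    set c' : ℝ := max c 0 with hc'
    have hc'1 : c' < 1 := max_lt hc one_pos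
    have hevg : ∀ᶠ τ in F, g τ ≤ (l + ENNReal.ofReal ε)
        + ENNReal.ofReal ε * (ENNReal.ofReal (a x) + (l + ENNReal.ofReal ε)) := by
      filter_upwards [Ioo_mem_nhdsLT hc'1] with τ hτ
      have hIoo : ∀ᶠ t' in F, t' ∈ Set.Ioo τ 1 := Ioo_mem_nhdsLT hτ.2
      obtain ⟨t, hgt, htτ⟩ := (hfreq.and_eventually hIoo).exists
      have hτ0 : 0 < τ := lt_of_le_of_lt (le_max_right c 0) hτ.1
      have ht0 : 0 < t := hτ0.trans htτ.1
      have ht1 : t < 1 := htτ.2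
      set s : ℝ := τ / t with hs
      have hs0 : 0 < s := div_pos hτ0 ht0
      have hs1 : s < 1 := (div_lt_one ht0).2 htτ.1
      have hsτ : τ < s := by
        rw [hs, lt_div_iff₀ ht0]
        exact mul_lt_of_lt_one_right hτ0 ht1
      have hsIoo : s ∈ Set.Ioo c 1 :=
        ⟨lt_trans (lt_of_le_of_lt (le_max_left c 0) hτ.1) hsτ, hs1⟩
      have hΔ : Delta U L a s < (ε : EReal) := hsub hsIoo
      -- the single term bounded by Delta
      have hξ'mem : t • ξ ∈ {ξ : Matrix (Fin m) (Fin n) ℝ | L x ξ < ⊤} :=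
        hdom x hx t ⟨ht0, ht1⟩ ⟨ξ, hξ, rfl⟩
      have hterm : ((L x (s • (t • ξ)) : EReal) - (L x (t • ξ) : EReal))
            / ((a x : EReal) + (L x (t • ξ) : EReal)) ≤ Delta U L a s := by
        refine le_trans (le_biSup (fun ξ : Matrix (Fin m) (Fin n) ℝ =>
          ((L x (s • ξ) : EReal) - (L x ξ : EReal))
            / ((a x : EReal) + (L x ξ : EReal))) hξ'mem) ?_
        exact le_biSup (fun x => ⨆ ξ ∈ {ξ : Matrix (Fin m) (Fin n) ℝ | L x ξ < ⊤},
          ((L x (s • ξ) : EReal) - (L x ξ : EReal))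
            / ((a x : EReal) + (L x ξ : EReal))) hx
      have hst : s • (t • ξ) = τ • ξ := by
        rw [smul_smul, hs, div_mul_cancel₀ τ ht0.ne']
      rw [hst] at hterm
      -- pass to real numbers
      have hgτtop : g τ < ⊤ := hmem τ ⟨hτ0, hτ.2⟩
      have hgttop : g t < ⊤ := hξ'mem
      set Bτ : ℝ := (g τ).toReal with hBτ
      set Bt : ℝ := (g t).toReal with hBt
      have hcoeτ : (L x (τ • ξ) : EReal) = (Bτ : EReal) :=
        coe_ennreal_fin _ hgτtop.ne
      have hcoet : (L x (t • ξ) : EReal) = (Bt : EReal) :=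
        coe_ennreal_fin _ hgttop.ne
      rw [hcoeτ, hcoet, ← EReal.coe_sub, ← EReal.coe_add, ← EReal.coe_div] at hterm
      have hreal : (Bτ - Bt) / (a x + Bt) ≤ ε :=
        EReal.coe_le_coe_iff.1 (hterm.trans hΔ.le)
      have hden : 0 < a x + Bt := add_pos_of_pos_of_nonneg (ha x) ENNReal.toReal_nonneg
      have hreal2 : Bτ ≤ Bt + ε * (a x + Bt) := by
        have := (div_le_iff₀ hden).1 hreal
        linarith
      -- back to ℝ≥0∞
      have h1 : g τ = ENNReal.ofReal Bτ := (ENNReal.ofReal_toReal hgτtop.ne).symm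
      have h2 : g τ ≤ g t + ENNReal.ofReal ε * (ENNReal.ofReal (a x) + g t) := by
        rw [h1]
        calc ENNReal.ofReal Bτ ≤ ENNReal.ofReal (Bt + ε * (a x + Bt)) :=
              ENNReal.ofReal_le_ofReal hreal2
          _ = ENNReal.ofReal Bt + ENNReal.ofReal ε * ENNReal.ofReal (a x + Bt) := by
              rw [ENNReal.ofReal_add ENNReal.toReal_nonneg
                (mul_nonneg hε.le hden.le), ENNReal.ofReal_mul hε.le]
          _ = g t + ENNReal.ofReal ε * (ENNReal.ofReal (a x) + g t) := by
              rw [ENNReal.ofReal_toReal hgttop.ne,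
                ENNReal.ofReal_add (ha x).le ENNReal.toReal_nonneg,
                ENNReal.ofReal_toReal hgttop.ne]
      refine h2.trans ?_
      gcongr <;> exact hgt.le
    exact limsup_le_of_le (by isBoundedDefault) hevg
  -- conclude via an ε/3-type argument
  apply ENNReal.le_of_forall_pos_le_add
  intro ε hε hlt
  set C : ℝ := a x + l.toReal + 1 with hC
  have hC0 : 0 < C := by
    have := (ha x); have := ENNReal.toReal_nonneg (a := l); positivity
  set δ : ℝ := min 1 (ε / (1 + C)) with hδ
  have hδ0 : 0 < δ := lt_min one_pos (div_pos hε (by linarith))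
  have hδ1 : δ ≤ 1 := min_le_left _ _
  refine (KEY δ hδ0).trans ?_
  have hlR : l = ENNReal.ofReal l.toReal := (ENNReal.ofReal_toReal hltop).symm
  have step : ENNReal.ofReal δ * (ENNReal.ofReal (a x) + (l + ENNReal.ofReal δ))
      ≤ ENNReal.ofReal (δ * C) := by
    rw [ENNReal.ofReal_mul hδ0.le]
    apply mul_le_mul_right
    rw [hlR, ← ENNReal.ofReal_add ENNReal.toReal_nonneg hδ0.le,
      ← ENNReal.ofReal_add (ha x).le (by positivity)]
    apply ENNReal.ofReal_le_ofReal
    rw [hC]; linarith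
  calc (l + ENNReal.ofReal δ)
      + ENNReal.ofReal δ * (ENNReal.ofReal (a x) + (l + ENNReal.ofReal δ))
      ≤ (l + ENNReal.ofReal δ) + ENNReal.ofReal (δ * C) := by gcongr
    _ = l + (ENNReal.ofReal δ + ENNReal.ofReal (δ * C)) := by rw [add_assoc]
    _ = l + ENNReal.ofReal (δ + δ * C) := by
        rw [ENNReal.ofReal_add hδ0.le (by positivity)]
    _ ≤ l + ε := by
        gcongr
        have hδle : δ ≤ ε / (1 + C) := min_le_right _ _
        have : δ + δ * C = δ * (1 + C) := by ring
        rw [this]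
        have h2 : δ * (1 + C) ≤ ε := by
          rw [← div_mul_cancel₀ (ε : ℝ) (show (1:ℝ) + C ≠ 0 by linarith)]
          exact mul_le_mul_of_nonneg_right hδle (by linarith)
        calc ENNReal.ofReal (δ * (1 + C)) ≤ ENNReal.ofReal (ε : ℝ) :=
              ENNReal.ofReal_le_ofReal h2
          _ = (ε : ℝ≥0∞) := ENNReal.ofReal_coe_nnreal
end

section
/- Let U ⊂ ℝ^d be open and L : U × M^{m×d} → [0,∞] be ru-usc with respect to a ∈ L¹_loc(U;(0,∞)), and assume t·cl(𝕃_x) ⊂ 𝕃_x for all x ∈ U and t ∈ (0,1). Define L̂(x,ξ) := liminf_{t→1⁻} L(x,tξ). Then L̂ is ru-usc: more precisely Δ_{L̂}^a(t) ≤ Δ_L^a(t) for all t ∈ [0,1), hence limsup_{t→1} Δ_{L̂}^a(t) ≤ 0. -/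
open MeasureTheory ENNReal

open Filter

open Pointwise

lemma ecoe_aux {P : ℝ≥0∞} (hP : P ≠ ⊤) : (P : EReal) = ((P.toReal : ℝ) : EReal) := by
  conv_lhs => rw [← ENNReal.ofReal_toReal hP]
  rw [EReal.coe_ennreal_ofReal, max_eq_left ENNReal.toReal_nonneg]

lemma key_aux {d m n : ℕ}
    (U : Set (EuclideanSpace ℝ (Fin d)))
    (L : EuclideanSpace ℝ (Fin d) → Matrix (Fin m) (Fin n) ℝ → ℝ≥0∞)
    (a : EuclideanSpace ℝ (Fin d) → ℝ) (ha : ∀ x, 0 < a x)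
    (hdom : ∀ x ∈ U, ∀ t ∈ Set.Ioo (0:ℝ) 1,
      t • closure {ξ : Matrix (Fin m) (Fin n) ℝ | L x ξ < ⊤}
        ⊆ {ξ : Matrix (Fin m) (Fin n) ℝ | L x ξ < ⊤})
    (Lhat : EuclideanSpace ℝ (Fin d) → Matrix (Fin m) (Fin n) ℝ → ℝ≥0∞)
    (hLhat : ∀ x ξ, Lhat x ξ
        = liminf (fun t : ℝ => L x (t • ξ)) (nhdsWithin 1 (Set.Iio 1)))
    (t : ℝ) :
    Delta U Lhat a t ≤ Delta U L a t := by
  set l := nhdsWithin (1:ℝ) (Set.Iio 1) with hl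
  conv_lhs => rw [Delta]
  refine iSup₂_le fun x hx => iSup₂_le fun ξ hξ => ?_
  simp only [Set.mem_setOf_eq] at hξ
  set D := Delta U L a t with hDdef
  set A := a x with hA
  have hA0 : 0 < A := ha x
  -- the liminf defining Lhat x ξ
  have hliminf : liminf (fun s : ℝ => L x (s • ξ)) l = Lhat x ξ := (hLhat x ξ).symm
  have hfreq : ∃ᶠ s in l, L x (s • ξ) < ⊤ :=
    frequently_lt_of_liminf_lt (h := by rw [hliminf]; exact hξ)
  have hev : ∀ᶠ s in l, s ∈ Set.Ioo (0:ℝ) 1 :=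
    eventually_of_mem (Ioo_mem_nhdsLT one_pos) (fun s hs => hs)
  -- all radii in (0,1) are in the domain
  have hall : ∀ r ∈ Set.Ioo (0:ℝ) 1, L x (r • ξ) < ⊤ := by
    intro r hr
    obtain ⟨s₀, hs₀dom, hs₀⟩ :=
      (hfreq.and_eventually
        (eventually_of_mem (Ioo_mem_nhdsLT hr.2) (fun s hs => hs))).exists
    have hs₀0 : 0 < s₀ := hr.1.trans hs₀.1
    have hfrac : r / s₀ ∈ Set.Ioo (0:ℝ) 1 :=
      ⟨div_pos hr.1 hs₀0, (div_lt_one hs₀0).2 hs₀.1⟩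
    refine hdom x hx _ hfrac ⟨s₀ • ξ, subset_closure hs₀dom, ?_⟩
    show (r / s₀) • (s₀ • ξ) = r • ξ
    rw [smul_smul, div_mul_cancel₀ r hs₀0.ne']
  -- each rescaled term is bounded by D
  have hterm : ∀ s ∈ Set.Ioo (0:ℝ) 1,
      ((L x (t • (s • ξ)) : EReal) - (L x (s • ξ) : EReal)) /
        ((a x : EReal) + (L x (s • ξ) : EReal)) ≤ D := by
    intro s hs
    rw [hDdef, Delta]
    exact le_iSup₂_of_le x hx (le_iSup₂_of_le (s • ξ) (hall s hs) le_rfl)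
  rcases eq_or_ne D ⊤ with hDtop | hDtop
  · rw [hDtop]; exact le_top
  -- real value of denominators
  have hq : ∀ s ∈ Set.Ioo (0:ℝ) 1,
      (L x (s • ξ) : EReal) = (((L x (s • ξ)).toReal : ℝ) : EReal) :=
    fun s hs => ecoe_aux (hall s hs).ne
  -- the key real inequality from `hterm`
  have hreal : ∀ s ∈ Set.Ioo (0:ℝ) 1, ∀ c : ℝ, D ≤ (c : EReal) →
      L x (t • (s • ξ)) ≠ ⊤ ∧
      ((L x (t • (s • ξ))).toReal - (L x (s • ξ)).toReal
        ≤ (A + (L x (s • ξ)).toReal) * c) := by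
    intro s hs c hc
    set q := (L x (s • ξ)).toReal with hqdef
    have hq0 : 0 ≤ q := ENNReal.toReal_nonneg
    have hpos : (0 : EReal) < ((A + q : ℝ) : EReal) := by
      exact_mod_cast (by linarith : (0:ℝ) < A + q)
    have h1 : ((L x (t • (s • ξ)) : EReal) - (L x (s • ξ) : EReal))
        ≤ ((A + q : ℝ) : EReal) * (c : EReal) := by
      have h2 := (hterm s hs).trans hc
      rw [hq s hs] at h2 ⊢
      rw [← hqdef] at h2 ⊢
      have hden : (a x : EReal) + ((q : ℝ) : EReal) = ((A + q : ℝ) : EReal) := by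
        rw [hA]
        norm_cast
      rw [hden] at h2
      exact (EReal.div_le_iff_le_mul hpos (EReal.coe_ne_top _)).1 h2
    rcases eq_or_ne (L x (t • (s • ξ))) ⊤ with hPt | hPt
    · exfalso
      rw [hPt, hq s hs, EReal.coe_ennreal_top, EReal.top_sub_coe, ← EReal.coe_mul] at h1
      exact (EReal.coe_ne_top _) (top_le_iff.1 h1)
    · refine ⟨hPt, ?_⟩
      rw [ecoe_aux hPt, hq s hs, ← EReal.coe_sub, ← EReal.coe_mul] at h1
      exact_mod_cast h1
  -- D > -1
  have hDbot : (-1 : EReal) < D := by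
    by_contra h
    push_neg at h
    obtain ⟨hne, hle⟩ := hreal (1/2) (by norm_num) (-1)
      (h.trans_eq (by rw [EReal.coe_neg, EReal.coe_one]))
    have := ENNReal.toReal_nonneg (a := L x (t • ((1/2 : ℝ) • ξ)))
    have hq0 : 0 ≤ (L x ((1/2 : ℝ) • ξ)).toReal := ENNReal.toReal_nonneg
    nlinarith
  -- D is real
  set Δr := D.toReal with hΔr
  have hDco : D = (Δr : EReal) := (EReal.coe_toReal hDtop (by
    intro h; rw [h] at hDbot; exact (not_lt.2 bot_le) hDbot)).symm
  have hΔr1 : -1 < Δr := by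
    rw [hDco, show (-1 : EReal) = ((-1 : ℝ) : EReal) from by
      rw [EReal.coe_neg, EReal.coe_one]] at hDbot
    exact_mod_cast hDbot
  set R := (Lhat x ξ).toReal with hR
  have hR0 : 0 ≤ R := ENNReal.toReal_nonneg
  -- claim for every positive ε
  have claim : ∀ ε : ℝ, 0 < ε →
      Lhat x (t • ξ) ≤ ENNReal.ofReal ((1 + Δr) * (A + R + ε) - A) ∧
      0 ≤ (1 + Δr) * (A + R + ε) - A := by
    intro ε hε
    have hlt : liminf (fun s : ℝ => L x (s • ξ)) l < Lhat x ξ + ENNReal.ofReal ε := by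
      rw [hliminf]
      exact ENNReal.lt_add_right hξ.ne (by simpa using (ENNReal.ofReal_pos.2 hε).ne')
    have hfr : ∃ᶠ s in l, L x (s • ξ) < Lhat x ξ + ENNReal.ofReal ε :=
      frequently_lt_of_liminf_lt (h := hlt)
    have hkey : ∀ s, s ∈ Set.Ioo (0:ℝ) 1 → L x (s • ξ) < Lhat x ξ + ENNReal.ofReal ε →
        L x (t • (s • ξ)) ≤ ENNReal.ofReal ((1 + Δr) * (A + R + ε) - A) ∧
        0 ≤ (1 + Δr) * (A + R + ε) - A := by
      intro s hs hlts
      obtain ⟨hne, hle⟩ := hreal s hs Δr hDco.le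
      set q := (L x (s • ξ)).toReal with hqdef
      have hq0 : 0 ≤ q := ENNReal.toReal_nonneg
      have hqlt : q < R + ε := by
        have htop : Lhat x ξ + ENNReal.ofReal ε ≠ ⊤ :=
          ENNReal.add_ne_top.2 ⟨hξ.ne, ENNReal.ofReal_ne_top⟩
        have := ENNReal.toReal_lt_toReal (hall s hs).ne htop |>.2 hlts
        rwa [ENNReal.toReal_add hξ.ne ENNReal.ofReal_ne_top, ← hR,
          ENNReal.toReal_ofReal hε.le] at this
      have hp0 : 0 ≤ (L x (t • (s • ξ))).toReal := ENNReal.toReal_nonneg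
      have hmono : (L x (t • (s • ξ))).toReal ≤ (1 + Δr) * (A + R + ε) - A := by
        nlinarith
      refine ⟨?_, hp0.trans hmono⟩
      rw [← ENNReal.ofReal_toReal hne]
      exact ENNReal.ofReal_le_ofReal hmono
    have hfr2 : ∃ᶠ s in l,
        L x (t • (s • ξ)) ≤ ENNReal.ofReal ((1 + Δr) * (A + R + ε) - A) :=
      ((hfr.and_eventually hev).mono fun s hs => (hkey s hs.2 hs.1).1)
    obtain ⟨s₁, hs₁⟩ := (hfr.and_eventually hev).exists
    refine ⟨?_, (hkey s₁ hs₁.2 hs₁.1).2⟩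
    have heq : Lhat x (t • ξ) = liminf (fun s : ℝ => L x (t • (s • ξ))) l := by
      rw [hLhat x (t • ξ)]
      congr 1
      funext s
      rw [smul_smul, smul_smul, mul_comm]
    rw [heq]
    exact liminf_le_of_frequently_le' hfr2
  have h1Δ : 0 < 1 + Δr := by linarith
  set B := (1 + Δr) * (A + R) - A with hB
  have hB0 : 0 ≤ B := by
    by_contra h
    push_neg at h
    have hεpos : (0:ℝ) < -B / (2 * (1 + Δr)) := div_pos (by linarith) (by linarith)
    have hc := (claim (-B / (2 * (1 + Δr))) hεpos).2
    have hexp : (1 + Δr) * (A + R + -B / (2 * (1 + Δr))) - A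
        = B + (1 + Δr) * (-B / (2 * (1 + Δr))) := by rw [hB]; ring
    rw [hexp] at hc
    have h2 : (1 + Δr) * (-B / (2 * (1 + Δr))) = -B / 2 := by
      field_simp
    rw [h2] at hc
    linarith
  -- pass to the limit ε → 0
  have hTle : Lhat x (t • ξ) ≤ ENNReal.ofReal B := by
    have hcont : Continuous fun ε : ℝ => ENNReal.ofReal ((1 + Δr) * (A + R + ε) - A) :=
      ENNReal.continuous_ofReal.comp
        ((continuous_const.mul (continuous_const.add continuous_id)).sub continuous_const)
    have htend : Tendsto (fun ε : ℝ => ENNReal.ofReal ((1 + Δr) * (A + R + ε) - A))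
        (nhdsWithin 0 (Set.Ioi 0)) (nhds (ENNReal.ofReal B)) := by
      have h0 := (hcont.tendsto 0).mono_left
        (nhdsWithin_le_nhds (s := Set.Ioi (0:ℝ)))
      have : (1 + Δr) * (A + R + 0) - A = B := by rw [hB]; ring
      rwa [this] at h0
    refine ge_of_tendsto htend ?_
    exact eventually_of_mem self_mem_nhdsWithin (fun ε hε => (claim ε hε).1)
  -- conclude
  have hLhatR : (Lhat x ξ : EReal) = ((R : ℝ) : EReal) := ecoe_aux hξ.ne
  have hposden : (0 : EReal) < ((A + R : ℝ) : EReal) := by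
    exact_mod_cast (by linarith : (0:ℝ) < A + R)
  rw [hLhatR]
  have hden : ((A : ℝ) : EReal) + ((R : ℝ) : EReal) = ((A + R : ℝ) : EReal) := by
    norm_cast
  rw [hden, EReal.div_le_iff_le_mul hposden (EReal.coe_ne_top _), hDco,
    ← EReal.coe_mul]
  have hnum : (Lhat x (t • ξ) : EReal) ≤ ((B : ℝ) : EReal) := by
    calc (Lhat x (t • ξ) : EReal) ≤ ((ENNReal.ofReal B : ℝ≥0∞) : EReal) :=
          EReal.coe_ennreal_le_coe_ennreal_iff.2 hTle
      _ = ((B : ℝ) : EReal) := by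
          rw [EReal.coe_ennreal_ofReal, max_eq_left hB0]
  calc (Lhat x (t • ξ) : EReal) - ((R : ℝ) : EReal)
      ≤ ((B : ℝ) : EReal) - ((R : ℝ) : EReal) := EReal.sub_le_sub hnum le_rfl
    _ = ((B - R : ℝ) : EReal) := by rw [← EReal.coe_sub]
    _ = (((A + R) * Δr : ℝ) : EReal) := by
        rw [show B - R = (A + R) * Δr from by rw [hB]; ring]

/-- if `L` is ru-usc w.r.t. `a` and `t·cl(𝕃_x) ⊂ 𝕃_x`, then the radial
regularization `L̂(x,ξ) := liminf_{t→1⁻} L(x,tξ)` satisfies `Δ_{L̂}^a(t) ≤ Δ_L^a(t)`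
for all `t ∈ [0,1)`, hence `limsup_{t→1} Δ_{L̂}^a(t) ≤ 0`, i.e. `L̂` is ru-usc. -/
theorem ru_usc_hat {d m n : ℕ}
    (U : Set (EuclideanSpace ℝ (Fin d))) (hU : IsOpen U)
    (L : EuclideanSpace ℝ (Fin d) → Matrix (Fin m) (Fin n) ℝ → ℝ≥0∞)
    (hLmeas : Measurable (Function.uncurry L))
    (a : EuclideanSpace ℝ (Fin d) → ℝ) (ha : ∀ x, 0 < a x)
    (haint : LocallyIntegrableOn a U)
    (hru : limsup (Delta U L a) (nhdsWithin 1 (Set.Iio 1)) ≤ (0 : EReal))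
    (hdom : ∀ x ∈ U, ∀ t ∈ Set.Ioo (0:ℝ) 1,
      t • closure {ξ : Matrix (Fin m) (Fin n) ℝ | L x ξ < ⊤}
        ⊆ {ξ : Matrix (Fin m) (Fin n) ℝ | L x ξ < ⊤})
    (Lhat : EuclideanSpace ℝ (Fin d) → Matrix (Fin m) (Fin n) ℝ → ℝ≥0∞)
    (hLhat : ∀ x ξ, Lhat x ξ
        = liminf (fun t : ℝ => L x (t • ξ)) (nhdsWithin 1 (Set.Iio 1))) :
    (∀ t ∈ Set.Ico (0:ℝ) 1, Delta U Lhat a t ≤ Delta U L a t) ∧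
      limsup (Delta U Lhat a) (nhdsWithin 1 (Set.Iio 1)) ≤ (0 : EReal) := by
  have key := key_aux U L a ha hdom Lhat hLhat
  refine ⟨fun t _ => key t, ?_⟩
  refine le_trans (limsup_le_limsup (Eventually.of_forall fun t => key t)) hru
end

section
/- Let L : ℝ^d × M^{m×d} → [0,∞] be Borel measurable, 1-periodic in x, and periodically ru-usc with respect to a 1-periodic a ∈ L¹_loc(ℝ^d;(0,∞)). Define the homogenized integrand ℋL(ξ) := inf over integers k ≥ 1 and φ ∈ W^{1,p}_0(kY; ℝ^m) of the average over kY of L(x, ξ + ∇φ(x)) dx, where Y = (0,1)^d. Then ℋL is ru-usc with respect to the constant ⟨a⟩ = ∫_Y a(y) dy; more precisely Δ_{ℋL}^{⟨a⟩}(t) ≤ Δ_L^a(t) for all t ∈ [0,1]. -/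
open MeasureTheory ENNReal

open Filter

/-- The open cube `(0,k)^d` in `ℝ^d`. -/
def cube (d : ℕ) (k : ℕ) : Set (EuclideanSpace ℝ (Fin d)) :=
  {x | ∀ i, x i ∈ Set.Ioo (0 : ℝ) (k : ℝ)}

/-- The gradient matrix `∇φ(x)` of a map `φ : ℝ^d → ℝ^m`. -/
noncomputable def gradMat {d m : ℕ} (φ : EuclideanSpace ℝ (Fin d) → EuclideanSpace ℝ (Fin m))
    (x : EuclideanSpace ℝ (Fin d)) : Matrix (Fin m) (Fin d) ℝ :=
  Matrix.of fun i j => fderiv ℝ φ x (EuclideanSpace.single j 1) i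

/-- A model for `W^{1,p}_0(A;ℝ^m)`: `C¹` maps supported in `A` which together with
their differential belong to `L^p`. -/
def W1p0 {d m : ℕ} (p : ℝ≥0∞) (A : Set (EuclideanSpace ℝ (Fin d))) :
    Set (EuclideanSpace ℝ (Fin d) → EuclideanSpace ℝ (Fin m)) :=
  {φ | ContDiff ℝ 1 φ ∧ tsupport φ ⊆ A ∧ MeasureTheory.MemLp φ p ∧
    MeasureTheory.MemLp (fun x => fderiv ℝ φ x) p}

/-- The Braides–Müller homogenization formula `ℋL`. -/
noncomputable def homogenized {d m : ℕ} (p : ℝ≥0∞)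
    (L : EuclideanSpace ℝ (Fin d) → Matrix (Fin m) (Fin d) ℝ → ℝ≥0∞) :
    Matrix (Fin m) (Fin d) ℝ → ℝ≥0∞ := fun ξ =>
  ⨅ k : ℕ, ⨅ _ : 1 ≤ k, ⨅ φ ∈ W1p0 (d := d) (m := m) p (cube d k),
    (∫⁻ x in cube d k, L x (ξ + gradMat φ x)) / ((k : ℝ≥0∞) ^ d)

/-- `Δ^c_h(t)` for an `x`-independent integrand `h` and constant weight `c`. -/
noncomputable def DeltaH {m n : ℕ} (h : Matrix (Fin m) (Fin n) ℝ → ℝ≥0∞)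
    (c : ℝ) (t : ℝ) : EReal :=
  ⨆ ξ ∈ {ξ : Matrix (Fin m) (Fin n) ℝ | h ξ < ⊤},
    ((h (t • ξ) : EReal) - (h ξ : EReal)) / ((c : EReal) + (h ξ : EReal))

/-!
Fix `t` and a real `δ > Δ_L^a(t)`, so that `L(x, tη) ≤ L(x, η) + δ (a(x) + L(x, η))` for all
`x`, `η`. For a competitor `φ` on `kY`, the rescaled map `tφ` is a competitor for `tξ` with
`tξ + ∇(tφ) = t (ξ + ∇φ)`; averaging the pointwise bound at `η = ξ + ∇φ(x)` over `kY`, where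
the average of `a` is `⟨a⟩` by periodicity, gives the same bound for the averages, and
taking the infimum over `k` and `φ` gives `ℋL(tξ) ≤ ℋL(ξ) + δ (⟨a⟩ + ℋL(ξ))`, i.e.
`Δ_{ℋL}^{⟨a⟩}(t) ≤ δ`.
-/

/-- Without negative numbers in `ℝ≥0∞`, the bound `A ≤ B + δ (c + B)` is written with the
negative part of `δ` moved to the left-hand side. -/
lemma ereal_sub_div_le_iff {A B : ℝ≥0∞} {c δ : ℝ} (hc : 0 < c) (hB : B ≠ ⊤) :
    ((A : EReal) - B) / ((c : EReal) + B) ≤ δ ↔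
      A + ENNReal.ofReal (-δ) * (ENNReal.ofReal c + B) ≤
        B + ENNReal.ofReal δ * (ENNReal.ofReal c + B) := by
  have hden : (0 : ℝ) < c + B.toReal := by positivity
  rw [← EReal.coe_ennreal_toReal hB, ← EReal.coe_add]
  rcases eq_or_ne A ⊤ with rfl | hA
  · rw [EReal.coe_ennreal_top, EReal.top_sub_coe, EReal.top_div_of_pos_ne_top
      (by exact_mod_cast hden) (EReal.coe_ne_top _)]
    simp [hB, ENNReal.mul_eq_top]
  rw [← EReal.coe_ennreal_toReal hA, ← EReal.coe_sub, ← EReal.coe_div, EReal.coe_le_coe_iff,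
    div_le_iff₀ hden, ← ENNReal.toReal_le_toReal (by finiteness) (by finiteness),
    ENNReal.toReal_add (by finiteness) (by finiteness),
    ENNReal.toReal_add (by finiteness) (by finiteness)]
  simp only [ENNReal.toReal_mul, ENNReal.toReal_add ENNReal.ofReal_ne_top hB,
    ENNReal.toReal_ofReal hc.le, ENNReal.toReal_ofReal']
  rcases le_total 0 δ with h | h
  · rw [max_eq_right (neg_nonpos.2 h), max_eq_left h]
    constructor <;> intro <;> linarith
  · rw [max_eq_left (neg_nonneg.2 h), max_eq_right h]
    constructor <;> intro <;> linarith

lemma le_mul_iInf_add {ι : Sort*} {f : ι → ℝ≥0∞} {x c e : ℝ≥0∞} (hc₀ : c ≠ 0) (hc : c ≠ ⊤)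
    (h : ∀ i, x ≤ c * f i + e) : x ≤ (c * ⨅ i, f i) + e := by
  rw [ENNReal.mul_iInf_of_ne hc₀ hc, ENNReal.iInf_add]
  exact le_iInf h

lemma lintegral_add_mul_le {α : Type*} [MeasurableSpace α] {μ : Measure α}
    {f g w : α → ℝ≥0∞} {q₁ q₂ : ℝ≥0∞} (hq₂ : q₂ ≠ ⊤) (hw : AEMeasurable w μ)
    (h : ∀ x, g x + q₁ * (w x + f x) ≤ f x + q₂ * (w x + f x)) :
    ∫⁻ x, g x ∂μ + q₁ * (∫⁻ x, w x ∂μ + ∫⁻ x, f x ∂μ) ≤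
      ∫⁻ x, f x ∂μ + q₂ * (∫⁻ x, w x ∂μ + ∫⁻ x, f x ∂μ) :=
  calc ∫⁻ x, g x ∂μ + q₁ * (∫⁻ x, w x ∂μ + ∫⁻ x, f x ∂μ)
      ≤ ∫⁻ x, g x ∂μ + ∫⁻ x, q₁ * (w x + f x) ∂μ := by
        gcongr
        exact (mul_le_mul_right (le_lintegral_add w f) q₁).trans (lintegral_const_mul_le _ _)
    _ ≤ ∫⁻ x, g x + q₁ * (w x + f x) ∂μ := le_lintegral_add _ _
    _ ≤ ∫⁻ x, (1 + q₂) * f x + q₂ * w x ∂μ := lintegral_mono fun x => (h x).trans_eq (by ring)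
    _ = ∫⁻ x, f x ∂μ + q₂ * (∫⁻ x, w x ∂μ + ∫⁻ x, f x ∂μ) := by
        rw [lintegral_add_right' _ (hw.const_mul q₂), lintegral_const_mul' _ _ (by finiteness),
          lintegral_const_mul' _ _ hq₂]
        ring

section Cube

variable {d : ℕ}

noncomputable def latticePoint (z : Fin d → ℤ) : EuclideanSpace ℝ (Fin d) :=
  (WithLp.equiv 2 (Fin d → ℝ)).symm fun i => (z i : ℝ)

lemma cube_eq_preimage (d k : ℕ) :
    cube d k = (MeasurableEquiv.toLp 2 (Fin d → ℝ)).symm ⁻¹'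
      Set.univ.pi fun _ => Set.Ioo (0 : ℝ) k := by
  ext x
  simp only [cube, Set.mem_ofPred_eq, Set.mem_preimage, Set.mem_univ_pi]
  rfl

lemma measurableSet_cube (d k : ℕ) : MeasurableSet (cube d k) := by
  rw [cube_eq_preimage]
  exact (MeasurableEquiv.toLp 2 (Fin d → ℝ)).symm.measurable
    (MeasurableSet.univ_pi fun _ => measurableSet_Ioo)

lemma volume_cube (d k : ℕ) : volume (cube d k) = (k : ℝ≥0∞) ^ d := by
  rw [cube_eq_preimage,
    (EuclideanSpace.volume_preserving_symm_measurableEquiv_toLp (Fin d)).measure_preimage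
      (MeasurableSet.univ_pi fun _ => measurableSet_Ioo).nullMeasurableSet,
    volume_pi_pi]
  simp [Real.volume_Ioo]

lemma integrableOn_cube {f : EuclideanSpace ℝ (Fin d) → ℝ} (hf : LocallyIntegrable f) (k : ℕ) :
    IntegrableOn f (cube d k) := by
  have hsub : cube d k ⊆ EuclideanSpace.equiv (Fin d) ℝ ⁻¹'
      Set.univ.pi fun _ => Set.Icc (0 : ℝ) k :=
    fun x hx i _ => Set.Ioo_subset_Icc_self (hx i)
  refine (hf.integrableOn_isCompact ?_).mono_set hsub
  exact (EuclideanSpace.equiv (Fin d) ℝ).toHomeomorph.isCompact_preimage.2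
    (isCompact_univ_pi fun _ => isCompact_Icc)

def unitCell (k : ℕ) (z : Fin d → Fin k) : Set (EuclideanSpace ℝ (Fin d)) :=
  (· - latticePoint fun i => (z i : ℤ)) ⁻¹' cube d 1

lemma mem_unitCell {k : ℕ} {z : Fin d → Fin k} {x : EuclideanSpace ℝ (Fin d)} :
    x ∈ unitCell k z ↔ ∀ i, x i - (z i : ℝ) ∈ Set.Ioo (0 : ℝ) 1 := by
  simp [unitCell, cube, latticePoint]

lemma measurableSet_unitCell {k : ℕ} (z : Fin d → Fin k) : MeasurableSet (unitCell k z) :=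
  measurable_id.sub_const _ (measurableSet_cube d 1)

lemma unitCell_subset_cube {k : ℕ} (z : Fin d → Fin k) : unitCell k z ⊆ cube d k := by
  intro x hx i
  obtain ⟨h₀, h₁⟩ := mem_unitCell.1 hx i
  have hz : ((z i : ℕ) : ℝ) + 1 ≤ k := by exact_mod_cast (z i).isLt
  constructor <;> linarith [Nat.cast_nonneg (α := ℝ) (z i : ℕ)]

lemma floor_eq_of_mem_unitCell {k : ℕ} {z : Fin d → Fin k} {x : EuclideanSpace ℝ (Fin d)}
    (hx : x ∈ unitCell k z) (i : Fin d) : ⌊x i⌋ = ((z i : ℕ) : ℤ) := by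
  obtain ⟨h₀, h₁⟩ := mem_unitCell.1 hx i
  rw [Int.floor_eq_iff]
  push_cast
  constructor <;> linarith

lemma pairwise_disjoint_unitCell (k : ℕ) :
    Pairwise (Function.onFun Disjoint (unitCell (d := d) k)) := by
  refine fun z w hzw => Set.disjoint_left.2 fun x hxz hxw => hzw (funext fun i => Fin.ext ?_)
  exact_mod_cast (floor_eq_of_mem_unitCell hxz i).symm.trans (floor_eq_of_mem_unitCell hxw i)

lemma volume_unitCell {k : ℕ} (z : Fin d → Fin k) : volume (unitCell k z) = 1 := by
  rw [unitCell, (measurePreserving_sub_right volume _).measure_preimage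
    (measurableSet_cube d 1).nullMeasurableSet, volume_cube]
  simp

lemma lintegral_unitCell {f : EuclideanSpace ℝ (Fin d) → ℝ≥0∞}
    (hf : ∀ x z, f (x + latticePoint z) = f x) {k : ℕ} (z : Fin d → Fin k) :
    ∫⁻ x in unitCell k z, f x = ∫⁻ x in cube d 1, f x := by
  set v := latticePoint fun i => ((z i : ℕ) : ℤ)
  have hpre : (· + v) ⁻¹' unitCell k z = cube d 1 := by
    ext y
    simp [unitCell, v]
  rw [← (measurePreserving_add_right volume v).setLIntegral_comp_preimage_emb
    (MeasurableEquiv.addRight v).measurableEmbedding, hpre]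
  exact setLIntegral_congr_fun (measurableSet_cube d 1) fun y _ => hf y _

lemma iUnion_unitCell_ae_eq (k : ℕ) : (⋃ z, unitCell (d := d) k z) =ᵐ[volume] cube d k := by
  refine ae_eq_of_subset_of_measure_ge (Set.iUnion_subset unitCell_subset_cube) ?_
    (MeasurableSet.iUnion measurableSet_unitCell).nullMeasurableSet
    (by rw [volume_cube]; finiteness)
  rw [measure_iUnion (pairwise_disjoint_unitCell k) measurableSet_unitCell, volume_cube]
  simp [volume_unitCell]

lemma lintegral_cube_of_periodic {f : EuclideanSpace ℝ (Fin d) → ℝ≥0∞}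
    (hf : ∀ x z, f (x + latticePoint z) = f x) (k : ℕ) :
    ∫⁻ x in cube d k, f x = (k : ℝ≥0∞) ^ d * ∫⁻ x in cube d 1, f x := by
  rw [← setLIntegral_congr (iUnion_unitCell_ae_eq k),
    lintegral_iUnion measurableSet_unitCell (pairwise_disjoint_unitCell k)]
  simp [lintegral_unitCell hf]

end Cube

section Homogenized

variable {d m : ℕ}

lemma gradMat_const_smul {φ : EuclideanSpace ℝ (Fin d) → EuclideanSpace ℝ (Fin m)}
    (hφ : ContDiff ℝ 1 φ) (t : ℝ) (x : EuclideanSpace ℝ (Fin d)) :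
    gradMat (fun y => t • φ y) x = t • gradMat φ x := by
  ext i j
  simp [gradMat, fderiv_fun_const_smul (hφ.differentiable one_ne_zero x) t]

lemma const_smul_mem_W1p0 {p : ℝ≥0∞} {A : Set (EuclideanSpace ℝ (Fin d))}
    {φ : EuclideanSpace ℝ (Fin d) → EuclideanSpace ℝ (Fin m)} (hφ : φ ∈ W1p0 p A) (t : ℝ) :
    (fun y => t • φ y) ∈ W1p0 p A := by
  obtain ⟨hC1, hsupp, hφp, hDφp⟩ := hφ
  refine ⟨hC1.const_smul t, (closure_mono (Function.support_const_smul_subset t φ)).trans hsupp,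
    hφp.const_smul t, ?_⟩
  have hD : (fun x => fderiv ℝ (fun y => t • φ y) x) = fun x => t • fderiv ℝ φ x :=
    funext fun x => fderiv_fun_const_smul (hC1.differentiable one_ne_zero x) t
  rw [hD]
  exact hDφp.const_smul t

lemma homogenized_eq_iInf_setLAverage (p : ℝ≥0∞)
    (L : EuclideanSpace ℝ (Fin d) → Matrix (Fin m) (Fin d) ℝ → ℝ≥0∞)
    (ξ : Matrix (Fin m) (Fin d) ℝ) :
    homogenized p L ξ = ⨅ k : ℕ, ⨅ _ : 1 ≤ k, ⨅ φ ∈ W1p0 (d := d) (m := m) p (cube d k),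
      ⨍⁻ x in cube d k, L x (ξ + gradMat φ x) ∂volume := by
  simp only [homogenized, setLAverage_eq, volume_cube]

lemma homogenized_le_setLAverage {p : ℝ≥0∞}
    (L : EuclideanSpace ℝ (Fin d) → Matrix (Fin m) (Fin d) ℝ → ℝ≥0∞) (ξ : Matrix (Fin m) (Fin d) ℝ)
    {k : ℕ} (hk : 1 ≤ k) {φ : EuclideanSpace ℝ (Fin d) → EuclideanSpace ℝ (Fin m)}
    (hφ : φ ∈ W1p0 p (cube d k)) :
    homogenized p L ξ ≤ ⨍⁻ x in cube d k, L x (ξ + gradMat φ x) ∂volume := by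
  rw [homogenized_eq_iInf_setLAverage]
  exact iInf₂_le_of_le k hk (iInf₂_le φ hφ)

lemma setLAverage_cube_of_periodic {f : EuclideanSpace ℝ (Fin d) → ℝ≥0∞}
    (hf : ∀ x z, f (x + latticePoint z) = f x) {k : ℕ} (hk : 1 ≤ k) :
    ⨍⁻ x in cube d k, f x ∂volume = ∫⁻ x in cube d 1, f x := by
  rw [setLAverage_eq, lintegral_cube_of_periodic hf, volume_cube, mul_comm,
    ENNReal.mul_div_cancel_right (by positivity) (by finiteness)]

theorem homogenized_smul_add_mul_le {p : ℝ≥0∞}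
    {L : EuclideanSpace ℝ (Fin d) → Matrix (Fin m) (Fin d) ℝ → ℝ≥0∞}
    {a : EuclideanSpace ℝ (Fin d) → ℝ} (ha : ∀ x, 0 ≤ a x) (haint : LocallyIntegrable a)
    (haper : ∀ x z, a (x + latticePoint z) = a x) {t : ℝ} {q₁ q₂ : ℝ≥0∞} (hq₂ : q₂ ≠ ⊤)
    (hL : ∀ x ξ, L x (t • ξ) + q₁ * (ENNReal.ofReal (a x) + L x ξ) ≤
      L x ξ + q₂ * (ENNReal.ofReal (a x) + L x ξ))
    (ξ : Matrix (Fin m) (Fin d) ℝ) :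
    homogenized p L (t • ξ) + q₁ * (ENNReal.ofReal (∫ y in cube d 1, a y) + homogenized p L ξ) ≤
      homogenized p L ξ + q₂ * (ENNReal.ofReal (∫ y in cube d 1, a y) + homogenized p L ξ) := by
  set A := ENNReal.ofReal (∫ y in cube d 1, a y)
  have haverage : ∀ k, 1 ≤ k → ⨍⁻ x in cube d k, ENNReal.ofReal (a x) ∂volume = A := by
    intro k hk
    rw [setLAverage_cube_of_periodic (fun x z => congrArg ENNReal.ofReal (haper x z)) hk]
    exact (ofReal_integral_eq_lintegral_ofReal (integrableOn_cube haint 1) (ae_of_all _ ha)).symm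
  have hcompetitor : ∀ k (hk : 1 ≤ k), ∀ φ ∈ W1p0 p (cube d k),
      homogenized p L (t • ξ) + q₁ * (A + homogenized p L ξ) ≤
        (1 + q₂) * ⨍⁻ x in cube d k, L x (ξ + gradMat φ x) ∂volume + q₂ * A := by
    intro k hk φ hφ
    calc _ ≤ ⨍⁻ x in cube d k, L x (t • ξ + gradMat (fun y => t • φ y) x) ∂volume +
          q₁ * (A + ⨍⁻ x in cube d k, L x (ξ + gradMat φ x) ∂volume) := by
          gcongr
          exacts [homogenized_le_setLAverage L _ hk (const_smul_mem_W1p0 hφ t),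
            homogenized_le_setLAverage L ξ hk hφ]
      _ ≤ ⨍⁻ x in cube d k, L x (ξ + gradMat φ x) ∂volume +
          q₂ * (A + ⨍⁻ x in cube d k, L x (ξ + gradMat φ x) ∂volume) := by
          simp only [gradMat_const_smul hφ.1, ← smul_add, ← haverage k hk]
          exact lintegral_add_mul_le hq₂
            ((integrableOn_cube haint k).aemeasurable.ennreal_ofReal.smul_measure _)
            fun x => hL x _
      _ = (1 + q₂) * ⨍⁻ x in cube d k, L x (ξ + gradMat φ x) ∂volume + q₂ * A := by ring
  calc _ ≤ (1 + q₂) * homogenized p L ξ + q₂ * A := by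
        conv_rhs => rw [homogenized_eq_iInf_setLAverage]
        refine le_mul_iInf_add (by simp) (by finiteness) fun k => ?_
        refine le_mul_iInf_add (by simp) (by finiteness) fun hk => ?_
        refine le_mul_iInf_add (by simp) (by finiteness) fun φ => ?_
        exact le_mul_iInf_add (by simp) (by finiteness) (hcompetitor k hk φ)
    _ = homogenized p L ξ + q₂ * (A + homogenized p L ξ) := by ring

end Homogenized

lemma add_mul_le_of_Delta_le {d m n : ℕ} {U : Set (EuclideanSpace ℝ (Fin d))}
    {L : EuclideanSpace ℝ (Fin d) → Matrix (Fin m) (Fin n) ℝ → ℝ≥0∞}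
    {a : EuclideanSpace ℝ (Fin d) → ℝ} {t δ : ℝ} (h : Delta U L a t ≤ δ)
    {x : EuclideanSpace ℝ (Fin d)} (hx : x ∈ U) (hax : 0 < a x) (ξ : Matrix (Fin m) (Fin n) ℝ) :
    L x (t • ξ) + ENNReal.ofReal (-δ) * (ENNReal.ofReal (a x) + L x ξ) ≤
      L x ξ + ENNReal.ofReal δ * (ENNReal.ofReal (a x) + L x ξ) := by
  rcases eq_or_ne (L x ξ) ⊤ with hξ | hξ
  · simp [hξ]
  · refine (ereal_sub_div_le_iff hax hξ).1 (le_trans ?_ h)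
    exact le_iSup₂_of_le (f := fun x _ => ⨆ ξ ∈ {ξ | L x ξ < ⊤}, _) x hx
      (le_iSup₂_of_le (f := fun ξ _ => _) ξ hξ.lt_top le_rfl)

lemma setIntegral_cube_pos {d : ℕ} {a : EuclideanSpace ℝ (Fin d) → ℝ} (ha : ∀ x, 0 < a x)
    (haint : LocallyIntegrable a) : 0 < ∫ y in cube d 1, a y := by
  rw [setIntegral_pos_iff_support_of_nonneg_ae (ae_of_all _ fun x => (ha x).le)
    (integrableOn_cube haint 1), Function.support_eq_univ fun x => (ha x).ne', Set.univ_inter,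
    volume_cube]
  simp

theorem homogenized_ru_usc_general {d m : ℕ} (p : ℝ≥0∞)
    (L : EuclideanSpace ℝ (Fin d) → Matrix (Fin m) (Fin d) ℝ → ℝ≥0∞)
    (a : EuclideanSpace ℝ (Fin d) → ℝ) (ha : ∀ x, 0 < a x)
    (haint : LocallyIntegrable a)
    (haper : ∀ (x : EuclideanSpace ℝ (Fin d)) (z : Fin d → ℤ), a (x + (WithLp.equiv 2 (Fin d → ℝ)).symm (fun i => (z i : ℝ))) = a x) :
    ∀ t ∈ Set.Icc (0:ℝ) 1,
      DeltaH (homogenized p L) (∫ y in cube d 1, a y) t ≤ Delta Set.univ L a t := by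
  intro t _
  refine EReal.le_of_forall_lt_iff_le.1 fun δ hδ => iSup₂_le fun ξ hξ => ?_
  refine (ereal_sub_div_le_iff (setIntegral_cube_pos ha haint) hξ.ne).2 ?_
  exact homogenized_smul_add_mul_le (fun x => (ha x).le) haint haper ENNReal.ofReal_ne_top
    (fun x => add_mul_le_of_Delta_le hδ.le (Set.mem_univ x) (ha x)) ξ

/-- if `L` is `1`-periodic in `x` and periodically ru-usc w.r.t. a
`1`-periodic weight `a`, then the homogenized integrand `ℋL` satisfies
`Δ_{ℋL}^{⟨a⟩}(t) ≤ Δ_L^a(t)` for all `t ∈ [0,1]`, where `⟨a⟩ = ∫_Y a`; in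
particular `ℋL` is ru-usc w.r.t. the constant `⟨a⟩`. -/
theorem homogenized_ru_usc {d m : ℕ} (p : ℝ≥0∞) (hp : 1 ≤ p)
    (L : EuclideanSpace ℝ (Fin d) → Matrix (Fin m) (Fin d) ℝ → ℝ≥0∞)
    (hLmeas : Measurable (Function.uncurry L))
    (hLper : ∀ (x : EuclideanSpace ℝ (Fin d)) (z : Fin d → ℤ) (ξ : Matrix (Fin m) (Fin d) ℝ),
      L (x + (WithLp.equiv 2 (Fin d → ℝ)).symm (fun i => (z i : ℝ))) ξ = L x ξ)
    (a : EuclideanSpace ℝ (Fin d) → ℝ) (ha : ∀ x, 0 < a x)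
    (haint : LocallyIntegrable a)
    (haper : ∀ (x : EuclideanSpace ℝ (Fin d)) (z : Fin d → ℤ), a (x + (WithLp.equiv 2 (Fin d → ℝ)).symm (fun i => (z i : ℝ))) = a x)
    (hru : limsup (Delta Set.univ L a) (nhdsWithin 1 (Set.Iio 1)) ≤ (0 : EReal)) :
    ∀ t ∈ Set.Icc (0:ℝ) 1,
      DeltaH (homogenized p L) (∫ y in cube d 1, a y) t ≤ Delta Set.univ L a t :=
  homogenized_ru_usc_general p L a ha haint haper
end

section
/- Let 𝒮 : (bounded open subsets of ℝ^d) → [0,∞] be subadditive (𝒮(A) ≤ 𝒮(B) + 𝒮(C) whenever B, C ⊂ A are disjoint and |A \ (B ∪ C)| = 0), ℤ^d-invariant (𝒮(A + z) = 𝒮(A) for all z ∈ ℤ^d), and suppose there exists c > 0 with 𝒮(A) ≤ c|A| for all bounded open A. Then for every open cube Q ⊂ ℝ^d, the limit as ε → 0 of 𝒮((1/ε)Q)/|(1/ε)Q| exists and equals inf over integers k ≥ 1 of 𝒮(kY)/k^d, where Y = (0,1)^d. -/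
/-!
Upper and lower bounds on the density both come from packing cubes. After an integer
translation, a cube of side `t` contains the cube `(0, n k)^d` with `n = ⌊(t - 1) / k⌋`, which
is tiled by `n^d` integer translates of `kY`; conversely, after an integer translation it fits
into the cube `(0, ⌈t⌉ + 1)^d`. In both cases subadditivity bounds `𝒮` of the large set by `𝒮`
of the pieces, and `𝒮 ≤ c |·|` bounds the uncovered part by `c` times its volume, which is
`O(t^(d-1))`. Hence the density `𝒮(Q_t) / t^d` of a cube of side `t` is at most
`𝒮(kY) / k^d + O(1 / t)` for every `k` and at least the density of some integer cube minus
`O(1 / t)`. Cube boundaries are Lebesgue-null, so cutting out the closure of a piece costs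
nothing.
-/

open MeasureTheory ENNReal Filter Pointwise Bornology

open Function Topology

section SetFunction

variable {X : Type*} [TopologicalSpace X] [Bornology X] [MeasurableSpace X]

def IsSubadditiveOnOpen (μ : Measure X) (S : Set X → ℝ≥0∞) : Prop :=
  ∀ A B C : Set X, IsOpen A → IsBounded A → IsOpen B → IsOpen C → B ⊆ A → C ⊆ A →
    Disjoint B C → μ (A \ (B ∪ C)) = 0 → S A ≤ S B + S C

def IsDominatedBy (μ : Measure X) (c : ℝ≥0∞) (S : Set X → ℝ≥0∞) : Prop :=
  ∀ A : Set X, IsOpen A → IsBounded A → S A ≤ c * μ A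

variable {μ : Measure X} {S : Set X → ℝ≥0∞} {c : ℝ≥0∞} {A B : Set X}

theorem IsSubadditiveOnOpen.le_add_diff_closure (hsub : IsSubadditiveOnOpen μ S)
    (hA : IsOpen A) (hAb : IsBounded A) (hB : IsOpen B) (hBA : B ⊆ A)
    (hBf : μ (frontier B) = 0) : S A ≤ S B + S (A \ closure B) := by
  refine hsub A B _ hA hAb hB (hA.sdiff isClosed_closure) hBA Set.sdiff_subset
    (Set.disjoint_sdiff_right.mono_left subset_closure) (measure_mono_null ?_ hBf)
  rintro x ⟨hxA, hx⟩
  rw [hB.frontier_eq]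
  simp only [Set.mem_union, Set.mem_sdiff, not_or, not_and, not_not] at hx
  exact ⟨hx.2 hxA, hx.1⟩

theorem IsSubadditiveOnOpen.le_add_mul_measure_sub [OpensMeasurableSpace X]
    (hsub : IsSubadditiveOnOpen μ S) (hdom : IsDominatedBy μ c S)
    (hA : IsOpen A) (hAb : IsBounded A) (hB : IsOpen B) (hBA : B ⊆ A)
    (hBf : μ (frontier B) = 0) (hBμ : μ B ≠ ∞) : S A ≤ S B + c * (μ A - μ B) := by
  calc S A ≤ S B + S (A \ closure B) := hsub.le_add_diff_closure hA hAb hB hBA hBf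
    _ ≤ S B + c * μ (A \ closure B) := by
      gcongr
      exact hdom _ (hA.sdiff isClosed_closure) (hAb.subset Set.sdiff_subset)
    _ ≤ S B + c * μ (A \ B) := by gcongr; exact subset_closure
    _ = S B + c * (μ A - μ B) := by
      rw [measure_sdiff hBA hB.measurableSet.nullMeasurableSet hBμ]

theorem IsSubadditiveOnOpen.le_sum_add_mul_measure_diff (hsub : IsSubadditiveOnOpen μ S)
    (hdom : IsDominatedBy μ c S) {ι : Type*} {s : Finset ι} {B : ι → Set X}
    (hB : ∀ i ∈ s, IsOpen (B i)) (hBf : ∀ i ∈ s, μ (frontier (B i)) = 0)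
    (hdisj : (s : Set ι).PairwiseDisjoint B) (hA : IsOpen A) (hAb : IsBounded A)
    (hBA : ∀ i ∈ s, B i ⊆ A) :
    S A ≤ ∑ i ∈ s, S (B i) + c * μ (A \ ⋃ i ∈ s, B i) := by
  induction s using Finset.cons_induction generalizing A with
  | empty => simpa using hdom A hA hAb
  | cons j s hj ih =>
    simp only [Finset.mem_cons, forall_eq_or_imp] at hB hBf hBA
    have hBC : ∀ i ∈ s, B i ⊆ A \ closure (B j) := fun i hi =>
      Set.subset_sdiff.2 ⟨hBA.2 i hi, ((hdisj (by simp [hi]) (by simp))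
        (ne_of_mem_of_not_mem hi hj)).closure_right (hB.2 i hi)⟩
    calc S A ≤ S (B j) + S (A \ closure (B j)) :=
          hsub.le_add_diff_closure hA hAb hB.1 hBA.1 hBf.1
      _ ≤ S (B j) + (∑ i ∈ s, S (B i) + c * μ ((A \ closure (B j)) \ ⋃ i ∈ s, B i)) := by
          gcongr
          exact ih hB.2 hBf.2 (hdisj.subset (by simp)) (hA.sdiff isClosed_closure)
            (hAb.subset Set.sdiff_subset) hBC
      _ ≤ ∑ i ∈ Finset.cons j s hj, S (B i)
          + c * μ (A \ ⋃ i ∈ Finset.cons j s hj, B i) := by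
          rw [Finset.sum_cons, add_assoc]
          gcongr _ + (_ + c * μ ?_)
          rintro x ⟨⟨hxA, hxj⟩, hxs⟩
          refine ⟨hxA, ?_⟩
          simp only [Set.mem_iUnion, Finset.mem_cons, exists_prop] at hxs ⊢
          rintro ⟨i, rfl | hi, hx⟩
          · exact hxj (subset_closure hx)
          · exact hxs ⟨i, hi, hx⟩

end SetFunction

section OpenCube

variable {d : ℕ}

def openCube (a : Fin d → ℝ) (t : ℝ) : Set (EuclideanSpace ℝ (Fin d)) :=
  {y | ∀ i, y i ∈ Set.Ioo (a i) (a i + t)}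

theorem cube_eq_openCube (k : ℕ) : cube d k = openCube 0 k := by
  simp [cube, openCube]

theorem openCube_eq_preimage (a : Fin d → ℝ) (t : ℝ) :
    openCube a t = (MeasurableEquiv.toLp 2 (Fin d → ℝ)).symm ⁻¹'
      Set.univ.pi fun i => Set.Ioo (a i) (a i + t) := by
  ext y
  simp [openCube]

theorem isOpen_openCube (a : Fin d → ℝ) (t : ℝ) : IsOpen (openCube a t) := by
  rw [openCube_eq_preimage]
  exact (isOpen_set_pi Set.finite_univ fun i _ => isOpen_Ioo).preimage (PiLp.continuous_ofLp 2 _)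

theorem isBounded_openCube (a : Fin d → ℝ) (t : ℝ) : IsBounded (openCube a t) := by
  rw [openCube_eq_preimage]
  exact (PiLp.antilipschitzWith_ofLp 2 _).isBounded_preimage
    (IsBounded.pi fun i => Metric.isBounded_Ioo _ _)

theorem convex_openCube (a : Fin d → ℝ) (t : ℝ) : Convex ℝ (openCube a t) := by
  rw [openCube_eq_preimage]
  exact (convex_pi fun i _ => convex_Ioo _ _).linear_preimage
    (WithLp.linearEquiv 2 ℝ (Fin d → ℝ)).toLinearMap

theorem volume_openCube (a : Fin d → ℝ) (t : ℝ) :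
    volume (openCube a t) = ENNReal.ofReal t ^ d := by
  rw [openCube_eq_preimage,
    (EuclideanSpace.volume_preserving_symm_measurableEquiv_toLp (Fin d)).measure_preimage
      (MeasurableSet.univ_pi fun i => measurableSet_Ioo).nullMeasurableSet, volume_pi_pi]
  simp [Real.volume_Ioo]

theorem volume_frontier_openCube (a : Fin d → ℝ) (t : ℝ) :
    volume (frontier (openCube a t)) = 0 :=
  (convex_openCube a t).addHaar_frontier volume

theorem openCube_subset_openCube {a b : Fin d → ℝ} {t u : ℝ} (ha : ∀ i, a i ≤ b i)
    (hb : ∀ i, b i + u ≤ a i + t) : openCube b u ⊆ openCube a t := fun _ hy i =>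
  ⟨(ha i).trans_lt (hy i).1, (hy i).2.trans_le (hb i)⟩

theorem disjoint_openCube_of_le {a b : Fin d → ℝ} {t u : ℝ} (i : Fin d)
    (h : a i + t ≤ b i) :
    Disjoint (openCube a t) (openCube b u) :=
  Set.disjoint_left.2 fun _ hya hyb => ((hya i).2.trans_le h).not_gt (hyb i).1

theorem pairwise_disjoint_openCube_grid {n : ℕ} (k : ℕ) :
    Pairwise (Disjoint on fun z : Fin d → Fin n => openCube (fun i => k * (z i : ℕ)) k) := by
  have key (z w : Fin d → Fin n) (i : Fin d) (h : z i < w i) :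
      Disjoint (openCube (fun i => k * (z i : ℕ)) k) (openCube (fun i => k * (w i : ℕ)) k) := by
    have : ((z i : ℕ) : ℝ) + 1 ≤ (w i : ℕ) := by exact_mod_cast h
    exact disjoint_openCube_of_le i (by nlinarith [k.cast_nonneg (α := ℝ)])
  intro z w hzw
  obtain ⟨i, hi⟩ := Function.ne_iff.1 hzw
  rcases hi.lt_or_gt with h | h
  · exact key z w i h
  · exact (key w z i h).symm

theorem image_add_intCast_openCube (a : Fin d → ℝ) (t : ℝ) (z : Fin d → ℤ) :
    (fun x => x + (WithLp.equiv 2 (Fin d → ℝ)).symm fun i => (z i : ℝ)) '' openCube a t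
      = openCube (fun i => a i + z i) t := by
  ext y
  simp only [Set.image_add_right, Set.mem_preimage, openCube]
  refine forall_congr' fun i => ?_
  simp [add_right_comm _ t]

theorem smul_openCube {ε : ℝ} (hε : 0 < ε) (a : Fin d → ℝ) (t : ℝ) :
    ε • openCube a t = openCube (ε • a) (ε * t) := by
  ext y
  rw [Set.mem_smul_set_iff_inv_smul_mem₀ hε.ne']
  refine forall_congr' fun i => ?_
  simp only [PiLp.smul_apply, Pi.smul_apply, smul_eq_mul, Set.mem_Ioo, ← mul_add,
    lt_inv_mul_iff₀ hε, inv_mul_lt_iff₀ hε]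

end OpenCube

theorem pow_sub_pow_div_pow_le {t u : ℝ} (ht : 0 < t) (hu : 0 ≤ u) (n : ℕ) :
    (t ^ n - u ^ n) / t ^ n ≤ n * (t - u) / t := by
  have hbernoulli := one_add_mul_le_pow (a := u / t - 1) (by linarith [div_nonneg hu ht.le]) n
  rw [add_sub_cancel, div_pow] at hbernoulli
  rw [sub_div, div_self (pow_pos ht n).ne', mul_div_assoc, sub_div, div_self ht.ne']
  linear_combination hbernoulli

theorem ENNReal.div_ofReal_pow_le_of_le {X ρ c : ℝ≥0∞} {d : ℕ} {t u : ℝ} (ht : 0 < t)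
    (hu : 0 ≤ u)
    (h : X ≤ ρ * ENNReal.ofReal t ^ d + c * (ENNReal.ofReal t ^ d - ENNReal.ofReal u ^ d)) :
    X / ENNReal.ofReal t ^ d ≤ ρ + c * ENNReal.ofReal (d * (t - u) / t) := by
  set T := ENNReal.ofReal t ^ d
  have hT₀ : T ≠ 0 := pow_ne_zero _ (ENNReal.ofReal_pos.2 ht).ne'
  have hT : T ≠ ∞ := pow_ne_top ofReal_ne_top
  calc X / T ≤ (ρ * T + c * (T - ENNReal.ofReal u ^ d)) / T := by gcongr
    _ = ρ + c * ((T - ENNReal.ofReal u ^ d) / T) := by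
      rw [ENNReal.add_div, ENNReal.mul_div_cancel_right hT₀ hT, mul_div_assoc]
    _ ≤ ρ + c * ENNReal.ofReal (d * (t - u) / t) := by
      gcongr
      simp only [T]
      rw [← ENNReal.ofReal_pow ht.le, ← ENNReal.ofReal_pow hu,
        ← ENNReal.ofReal_sub _ (by positivity), ← ENNReal.ofReal_div_of_pos (by positivity)]
      exact ENNReal.ofReal_le_ofReal (pow_sub_pow_div_pow_le ht hu d)

theorem tendsto_mul_ofReal_div_atTop {α : Type*} {l : Filter α} {c : ℝ≥0∞} (hc : c ≠ ∞)
    (C : ℝ) {t : α → ℝ} (ht : Tendsto t l atTop) :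
    Tendsto (fun x => c * ENNReal.ofReal (C / t x)) l (𝓝 0) := by
  simpa using ENNReal.Tendsto.const_mul
    (ENNReal.tendsto_ofReal (tendsto_const_nhds.div_atTop ht)) (Or.inr hc)

section CubeBounds

variable {d : ℕ} {S : Set (EuclideanSpace ℝ (Fin d)) → ℝ≥0∞} {c : ℝ≥0∞}
  {α : Type*} {l : Filter α}

def IsIntTranslationInvariant (S : Set (EuclideanSpace ℝ (Fin d)) → ℝ≥0∞) : Prop :=
  ∀ (A : Set (EuclideanSpace ℝ (Fin d))) (z : Fin d → ℤ), IsOpen A → IsBounded A →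
    S ((fun x => x + (WithLp.equiv 2 (Fin d → ℝ)).symm fun i => (z i : ℝ)) '' A) = S A

theorem IsIntTranslationInvariant.apply_openCube_add (hinv : IsIntTranslationInvariant S)
    (a : Fin d → ℝ) (t : ℝ) (z : Fin d → ℤ) :
    S (openCube (fun i => a i + z i) t) = S (openCube a t) := by
  rw [← image_add_intCast_openCube, hinv _ _ (isOpen_openCube a t) (isBounded_openCube a t)]

theorem IsSubadditiveOnOpen.le_openCube_add (hsub : IsSubadditiveOnOpen volume S)
    (hdom : IsDominatedBy volume c S) {a b : Fin d → ℝ} {t u : ℝ} (ha : ∀ i, a i ≤ b i)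
    (hb : ∀ i, b i + u ≤ a i + t) :
    S (openCube a t) ≤ S (openCube b u) + c * (ENNReal.ofReal t ^ d - ENNReal.ofReal u ^ d) := by
  simpa only [volume_openCube] using hsub.le_add_mul_measure_sub hdom (isOpen_openCube a t)
    (isBounded_openCube a t) (isOpen_openCube b u) (openCube_subset_openCube ha hb)
    (volume_frontier_openCube b u) (by rw [volume_openCube]; exact pow_ne_top ofReal_ne_top)

theorem IsSubadditiveOnOpen.cube_mul_le (hsub : IsSubadditiveOnOpen volume S)
    (hdom : IsDominatedBy volume c S) (hinv : IsIntTranslationInvariant S) (n k : ℕ) :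
    S (cube d (n * k)) ≤ n ^ d * S (cube d k) := by
  set B : (Fin d → Fin n) → Set (EuclideanSpace ℝ (Fin d)) :=
    fun z => openCube (fun i => k * (z i : ℕ)) k
  have hSB : ∀ z, S (B z) = S (cube d k) := fun z => by
    simpa [B, cube_eq_openCube] using hinv.apply_openCube_add 0 k (fun i => k * (z i : ℕ))
  have hdisj : Pairwise (Disjoint on B) := pairwise_disjoint_openCube_grid k
  have hBsub : ∀ z, B z ⊆ cube d (n * k) := fun z => by
    rw [cube_eq_openCube]
    refine openCube_subset_openCube (fun i => by positivity) (fun i => ?_)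
    have : ((z i : ℕ) : ℝ) + 1 ≤ n := by exact_mod_cast (z i).isLt
    simp only [Pi.zero_apply, zero_add]
    push_cast
    nlinarith [k.cast_nonneg (α := ℝ)]
  have hnull : volume (cube d (n * k) \ ⋃ z, B z) = 0 := by
    have hvol : volume (⋃ z, B z) = volume (cube d (n * k)) := by
      rw [measure_iUnion hdisj fun z => (isOpen_openCube _ _).measurableSet, tsum_fintype]
      simp [B, cube_eq_openCube, volume_openCube, mul_pow]
    rw [measure_sdiff (Set.iUnion_subset hBsub)
      (MeasurableSet.iUnion fun z => (isOpen_openCube _ _).measurableSet).nullMeasurableSet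
      (by rw [hvol, cube_eq_openCube, volume_openCube]; exact pow_ne_top ofReal_ne_top),
      hvol, tsub_self]
  calc S (cube d (n * k))
      ≤ ∑ z, S (B z) + c * volume (cube d (n * k) \ ⋃ z ∈ Finset.univ, B z) :=
        hsub.le_sum_add_mul_measure_diff hdom (fun z _ => isOpen_openCube _ _)
          (fun z _ => volume_frontier_openCube _ _) (hdisj.set_pairwise _)
          (by rw [cube_eq_openCube]; exact isOpen_openCube _ _)
          (by rw [cube_eq_openCube]; exact isBounded_openCube _ _) fun z _ => hBsub z
    _ = n ^ d * S (cube d k) := by simp [hSB, hnull]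

theorem IsSubadditiveOnOpen.openCube_div_le (hsub : IsSubadditiveOnOpen volume S)
    (hdom : IsDominatedBy volume c S) (hinv : IsIntTranslationInvariant S) (a : Fin d → ℝ)
    {t : ℝ} (ht : 0 < t) {n k : ℕ} (hk : k ≠ 0) (hnk : (n * k : ℝ) ≤ t - 1) :
    S (openCube a t) / ENNReal.ofReal t ^ d
      ≤ S (cube d k) / (k : ℝ≥0∞) ^ d + c * ENNReal.ofReal (d * (t - n * k) / t) := by
  refine ENNReal.div_ofReal_pow_le_of_le ht (by positivity) ?_
  set ρ := S (cube d k) / (k : ℝ≥0∞) ^ d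
  have htranslate : S (openCube (fun i => ⌈a i⌉) (n * k)) = S (cube d (n * k)) := by
    simpa [cube_eq_openCube] using hinv.apply_openCube_add 0 (n * k) fun i => ⌈a i⌉
  have hgrid : S (cube d (n * k)) ≤ ρ * ENNReal.ofReal (n * k) ^ d := by
    calc S (cube d (n * k)) ≤ n ^ d * S (cube d k) := hsub.cube_mul_le hdom hinv n k
      _ = ρ * ENNReal.ofReal (n * k) ^ d := by
        rw [ENNReal.ofReal_mul n.cast_nonneg, ENNReal.ofReal_natCast, ENNReal.ofReal_natCast,
          mul_pow, mul_left_comm, ENNReal.div_mul_cancel (by simp [hk]) (by simp)]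
  calc S (openCube a t)
      ≤ S (openCube (fun i => ⌈a i⌉) (n * k))
        + c * (ENNReal.ofReal t ^ d - ENNReal.ofReal (n * k) ^ d) :=
        hsub.le_openCube_add hdom (fun i => Int.le_ceil _)
          fun i => by linarith [Int.ceil_lt_add_one (a i)]
    _ ≤ ρ * ENNReal.ofReal t ^ d + c * (ENNReal.ofReal t ^ d - ENNReal.ofReal (n * k) ^ d) := by
        rw [htranslate]
        gcongr
        exact hgrid.trans (by gcongr; linarith)

theorem IsSubadditiveOnOpen.cube_div_le (hsub : IsSubadditiveOnOpen volume S)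
    (hdom : IsDominatedBy volume c S) (hinv : IsIntTranslationInvariant S) (a : Fin d → ℝ)
    {t : ℝ} (ht : 0 < t) {s : ℕ} (hs : t + 1 ≤ s) :
    S (cube d s) / (s : ℝ≥0∞) ^ d
      ≤ S (openCube a t) / ENNReal.ofReal t ^ d + c * ENNReal.ofReal (d * (s - t) / s) := by
  rw [← ENNReal.ofReal_natCast s]
  refine ENNReal.div_ofReal_pow_le_of_le (by linarith) ht.le ?_
  have htranslate : S (openCube (fun i => Int.fract (a i)) t) = S (openCube a t) := by
    simpa [Int.fract, sub_eq_add_neg] using hinv.apply_openCube_add a t fun i => -⌊a i⌋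
  calc S (cube d s)
      ≤ S (openCube (fun i => Int.fract (a i)) t)
        + c * (ENNReal.ofReal s ^ d - ENNReal.ofReal t ^ d) := by
        rw [cube_eq_openCube]
        exact hsub.le_openCube_add hdom (fun i => Int.fract_nonneg _)
          fun i => by simp only [Pi.zero_apply, zero_add]; linarith [Int.fract_lt_one (a i)]
    _ = S (openCube a t) / ENNReal.ofReal t ^ d * ENNReal.ofReal t ^ d
        + c * (ENNReal.ofReal s ^ d - ENNReal.ofReal t ^ d) := by
        rw [htranslate, ENNReal.div_mul_cancel (pow_ne_zero _ (ENNReal.ofReal_pos.2 ht).ne')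
          (pow_ne_top ofReal_ne_top)]
    _ ≤ S (openCube a t) / ENNReal.ofReal t ^ d * ENNReal.ofReal s ^ d
        + c * (ENNReal.ofReal s ^ d - ENNReal.ofReal t ^ d) := by
        gcongr
        linarith

theorem IsSubadditiveOnOpen.iInf_cube_div_le_liminf (hsub : IsSubadditiveOnOpen volume S)
    (hdom : IsDominatedBy volume c S) (hinv : IsIntTranslationInvariant S) (hc : c ≠ ∞)
    (a : α → Fin d → ℝ) {t : α → ℝ} (ht : Tendsto t l atTop) :
    ⨅ k : ℕ, ⨅ _ : 1 ≤ k, S (cube d k) / (k : ℝ≥0∞) ^ d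
      ≤ liminf (fun x => S (openCube (a x) (t x)) / ENNReal.ofReal (t x) ^ d) l := by
  rw [← ENNReal.liminf_add_of_right_tendsto_zero (tendsto_mul_ofReal_div_atTop hc (d * 2) ht)]
  refine le_liminf_of_le (by isBoundedDefault) ?_
  filter_upwards [ht.eventually_gt_atTop 0] with x hx
  have hs : t x + 1 ≤ (⌈t x⌉₊ + 1 : ℕ) := by push_cast; linarith [Nat.le_ceil (t x)]
  have hs' : (⌈t x⌉₊ + 1 : ℕ) ≤ t x + 2 := by
    push_cast; linarith [Nat.ceil_lt_add_one hx.le]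
  calc ⨅ k : ℕ, ⨅ _ : 1 ≤ k, S (cube d k) / (k : ℝ≥0∞) ^ d
      ≤ S (cube d (⌈t x⌉₊ + 1)) / ((⌈t x⌉₊ + 1 : ℕ) : ℝ≥0∞) ^ d :=
        iInf₂_le _ (by omega)
    _ ≤ _ := hsub.cube_div_le hdom hinv (a x) hx hs
    _ ≤ _ := by
      simp only [Pi.add_apply]
      gcongr <;> linarith

theorem IsSubadditiveOnOpen.limsup_div_openCube_le (hsub : IsSubadditiveOnOpen volume S)
    (hdom : IsDominatedBy volume c S) (hinv : IsIntTranslationInvariant S) (hc : c ≠ ∞)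
    (a : α → Fin d → ℝ) {t : α → ℝ} (ht : Tendsto t l atTop)
    {k : ℕ} (hk : 1 ≤ k) :
    limsup (fun x => S (openCube (a x) (t x)) / ENNReal.ofReal (t x) ^ d) l
      ≤ S (cube d k) / (k : ℝ≥0∞) ^ d := by
  set ρ := S (cube d k) / (k : ℝ≥0∞) ^ d
  calc limsup (fun x => S (openCube (a x) (t x)) / ENNReal.ofReal (t x) ^ d) l
      ≤ limsup ((fun _ => ρ) + fun x => c * ENNReal.ofReal (d * (k + 1) / t x)) l := by
        refine limsup_le_limsup ?_
        filter_upwards [ht.eventually_ge_atTop 1] with x hx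
        set n := ⌊(t x - 1) / k⌋₊
        have hk0 : (0 : ℝ) < k := by exact_mod_cast hk
        have hnk : n * k ≤ t x - 1 := (le_div_iff₀ hk0).1 (Nat.floor_le (by positivity))
        have hnk' : t x - 1 < (n + 1) * k := (div_lt_iff₀ hk0).1 (Nat.lt_floor_add_one _)
        refine (hsub.openCube_div_le hdom hinv (a x) (by linarith) (by omega) hnk).trans ?_
        simp only [Pi.add_apply]
        gcongr
        linarith
    _ = limsup (fun _ => ρ) l :=
        ENNReal.limsup_add_of_right_tendsto_zero (tendsto_mul_ofReal_div_atTop hc _ ht) _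
    _ ≤ ρ := limsup_le_of_le (by isBoundedDefault) (.of_forall fun _ => le_rfl)

theorem IsSubadditiveOnOpen.tendsto_div_openCube (hsub : IsSubadditiveOnOpen volume S)
    (hdom : IsDominatedBy volume c S) (hinv : IsIntTranslationInvariant S) (hc : c ≠ ∞)
    (a : α → Fin d → ℝ) {t : α → ℝ} (ht : Tendsto t l atTop) :
    Tendsto (fun x => S (openCube (a x) (t x)) / ENNReal.ofReal (t x) ^ d) l
      (𝓝 (⨅ k : ℕ, ⨅ _ : 1 ≤ k, S (cube d k) / (k : ℝ≥0∞) ^ d)) :=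
  tendsto_of_le_liminf_of_limsup_le (hsub.iInf_cube_div_le_liminf hdom hinv hc a ht)
    (le_iInf₂ fun _ hk => hsub.limsup_div_openCube_le hdom hinv hc a ht hk)

end CubeBounds

theorem akcoglu_krengel_general {d : ℕ}
    (S : Set (EuclideanSpace ℝ (Fin d)) → ℝ≥0∞)
    (hsub : ∀ A B C : Set (EuclideanSpace ℝ (Fin d)),
      IsOpen A → IsBounded A → IsOpen B → IsOpen C → B ⊆ A → C ⊆ A → Disjoint B C →
      volume (A \ (B ∪ C)) = 0 → S A ≤ S B + S C)
    (hinv : ∀ (A : Set (EuclideanSpace ℝ (Fin d))) (z : Fin d → ℤ), IsOpen A → IsBounded A →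
      S ((fun x => x + (WithLp.equiv 2 (Fin d → ℝ)).symm fun i => (z i : ℝ)) '' A) = S A)
    (c : ℝ≥0∞) (hc' : c ≠ ⊤)
    (hdom : ∀ A : Set (EuclideanSpace ℝ (Fin d)), IsOpen A → IsBounded A →
      S A ≤ c * volume A) :
    ∀ Q : Set (EuclideanSpace ℝ (Fin d)),
      (∃ (x₀ : EuclideanSpace ℝ (Fin d)) (r : ℝ), 0 < r ∧
        Q = {y | ∀ i, y i ∈ Set.Ioo (x₀ i) (x₀ i + r)}) →
      Tendsto (fun ε : ℝ => S ((1/ε) • Q) / volume ((1/ε) • Q))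
        (nhdsWithin 0 (Set.Ioi 0))
        (nhds (⨅ k : ℕ, ⨅ _ : 1 ≤ k, S (cube d k) / (k : ℝ≥0∞) ^ d)) := by
  rintro Q ⟨x₀, r, hr, rfl⟩
  have hside : Tendsto (fun ε : ℝ => 1 / ε * r) (𝓝[>] 0) atTop := by
    simpa using tendsto_inv_nhdsGT_zero.atTop_mul_const hr
  refine (IsSubadditiveOnOpen.tendsto_div_openCube hsub hdom hinv hc'
    (fun ε => (1 / ε) • ⇑x₀) hside).congr' ?_
  filter_upwards [self_mem_nhdsWithin] with ε hε
  change _ = S ((1 / ε) • openCube x₀ r) / volume ((1 / ε) • openCube x₀ r)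
  rw [smul_openCube (one_div_pos.2 hε), volume_openCube]

/-- Akcoglu–Krengel: a subadditive, `ℤ^d`-invariant set function `𝒮`
on bounded open sets dominated by `c·|A|` satisfies
`𝒮((1/ε)Q)/|(1/ε)Q| → inf_{k≥1} 𝒮(kY)/k^d` as `ε → 0⁺`, for every open cube `Q`. -/
theorem akcoglu_krengel {d : ℕ}
    (S : Set (EuclideanSpace ℝ (Fin d)) → ℝ≥0∞)
    (hsub : ∀ A B C : Set (EuclideanSpace ℝ (Fin d)),
      IsOpen A → IsBounded A → IsOpen B → IsOpen C → B ⊆ A → C ⊆ A → Disjoint B C →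
      volume (A \ (B ∪ C)) = 0 → S A ≤ S B + S C)
    (hinv : ∀ (A : Set (EuclideanSpace ℝ (Fin d))) (z : Fin d → ℤ), IsOpen A → IsBounded A →
      S ((fun x => x + (WithLp.equiv 2 (Fin d → ℝ)).symm fun i => (z i : ℝ)) '' A) = S A)
    (c : ℝ≥0∞) (hc : 0 < c) (hc' : c ≠ ⊤)
    (hdom : ∀ A : Set (EuclideanSpace ℝ (Fin d)), IsOpen A → IsBounded A →
      S A ≤ c * volume A) :
    ∀ Q : Set (EuclideanSpace ℝ (Fin d)),
      (∃ (x₀ : EuclideanSpace ℝ (Fin d)) (r : ℝ), 0 < r ∧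
        Q = {y | ∀ i, y i ∈ Set.Ioo (x₀ i) (x₀ i + r)}) →
      Tendsto (fun ε : ℝ => S ((1/ε) • Q) / volume ((1/ε) • Q))
        (nhdsWithin 0 (Set.Ioi 0))
        (nhds (⨅ k : ℕ, ⨅ _ : 1 ≤ k, S (cube d k) / (k : ℝ≥0∞) ^ d)) :=
  akcoglu_krengel_general S hsub hinv c hc' hdom
end

section
/- Let 𝔾 ⊂ M^{2×2} satisfy: 𝔾 is convex, det(I+ξ) > 0 for all ξ ∈ 𝔾, and tr(cof(I+ξ)^T(I+ζ)) > 0 for all ξ, ζ ∈ 𝔾. Let h : (0,∞) → [0,∞] be convex, nonincreasing, and satisfy h(λx) ≤ λ^{−r} h(x) for all λ ∈ (0,1), x > 0, for some r ≤ 1. Define g(ξ) = h(det(I+ξ)) for ξ ∈ 𝔾 and g(ξ) = ∞ otherwise. Then g(λξ + (1−λ)ζ) ≤ g(ξ) + g(ζ) for all ξ, ζ ∈ 𝔾 and λ ∈ (0,1). -/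
open Matrix ENNReal
open scoped Classical

/-- The cofactor matrix of a `2×2` matrix. -/
def cof (A : Matrix (Fin 2) (Fin 2) ℝ) : Matrix (Fin 2) (Fin 2) ℝ :=
  !![A 1 1, -(A 1 0); -(A 0 1), A 0 0]

lemma det_expand (A B : Matrix (Fin 2) (Fin 2) ℝ) (l : ℝ) :
    (l • A + (1 - l) • B).det =
      l ^ 2 * A.det + (1 - l) ^ 2 * B.det
        + l * (1 - l) * Matrix.trace ((cof A)ᵀ * B) := by
  simp [Matrix.det_fin_two, cof, Matrix.trace, Matrix.diag, Matrix.mul_apply,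
    Fin.sum_univ_two, Matrix.transpose_apply, Matrix.add_apply, smul_eq_mul, Matrix.cons_val', Matrix.cons_val_zero,
    Matrix.cons_val_one, Matrix.head_cons, Matrix.head_fin_const, Matrix.empty_val',
    Matrix.vecHead, Matrix.vecTail]
  ring

/-- with `𝔾` convex, `det(I+ξ) > 0` and `tr(cof(I+ξ)ᵀ(I+ζ)) > 0` on `𝔾`,
and `h : (0,∞) → [0,∞]` convex, nonincreasing with `h(λx) ≤ λ^{−r}h(x)` for some `r ≤ 1`,
the function `g = h(det(I+·))` on `𝔾` (`∞` outside) satisfies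
`g(λξ+(1−λ)ζ) ≤ g(ξ)+g(ζ)`. -/
theorem g_convex_combination_le (𝔾 : Set (Matrix (Fin 2) (Fin 2) ℝ))
    (hconv : Convex ℝ 𝔾)
    (hdet : ∀ ξ ∈ 𝔾, 0 < (1 + ξ).det)
    (htr : ∀ ξ ∈ 𝔾, ∀ ζ ∈ 𝔾, 0 < Matrix.trace ((cof (1 + ξ))ᵀ * (1 + ζ)))
    (h : ℝ → ℝ≥0∞)
    (hconvex : ∀ x y : ℝ, 0 < x → 0 < y → ∀ l ∈ Set.Icc (0:ℝ) 1,
      h (l * x + (1 - l) * y) ≤ ENNReal.ofReal l * h x + ENNReal.ofReal (1 - l) * h y)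
    (hmono : ∀ x y : ℝ, 0 < x → x ≤ y → h y ≤ h x)
    (r : ℝ) (hr : r ≤ 1)
    (hscale : ∀ l ∈ Set.Ioo (0:ℝ) 1, ∀ x : ℝ, 0 < x →
      h (l * x) ≤ ENNReal.ofReal (l ^ (-r)) * h x)
    (g : Matrix (Fin 2) (Fin 2) ℝ → ℝ≥0∞)
    (hg : ∀ ξ, g ξ = if ξ ∈ 𝔾 then h ((1 + ξ).det) else ⊤) :
    ∀ ξ ∈ 𝔾, ∀ ζ ∈ 𝔾, ∀ l ∈ Set.Ioo (0:ℝ) 1,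
      g (l • ξ + (1 - l) • ζ) ≤ g ξ + g ζ := by

  intro ξ hξ ζ hζ l hl
  obtain ⟨hl0, hl1⟩ := hl
  have hl1' : (0:ℝ) < 1 - l := by linarith
  have hM : l • ξ + (1 - l) • ζ ∈ 𝔾 := hconv hξ hζ hl0.le hl1'.le (by ring)
  set a := (1 + ξ).det with ha_def
  set b := (1 + ζ).det with hb_def
  have ha : 0 < a := hdet ξ hξ
  have hb : 0 < b := hdet ζ hζ
  have hT : 0 < Matrix.trace ((cof (1 + ξ))ᵀ * (1 + ζ)) := htr ξ hξ ζ hζ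
  have hsplit : (1 : Matrix (Fin 2) (Fin 2) ℝ) + (l • ξ + (1 - l) • ζ)
      = l • (1 + ξ) + (1 - l) • (1 + ζ) := by module
  have hdetM : (1 + (l • ξ + (1 - l) • ζ)).det
      = l ^ 2 * a + (1 - l) ^ 2 * b
        + l * (1 - l) * Matrix.trace ((cof (1 + ξ))ᵀ * (1 + ζ)) := by
    rw [hsplit, det_expand]
  rw [hg, hg, hg, if_pos hM, if_pos hξ, if_pos hζ, hdetM]
  have hpos2 : 0 < l ^ 2 * a + (1 - l) ^ 2 * b := by positivity
  have step1 : h (l ^ 2 * a + (1 - l) ^ 2 * b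
        + l * (1 - l) * Matrix.trace ((cof (1 + ξ))ᵀ * (1 + ζ)))
      ≤ h (l ^ 2 * a + (1 - l) ^ 2 * b) := by
    apply hmono _ _ hpos2
    nlinarith [mul_pos (mul_pos hl0 hl1') hT]
  have heq : l ^ 2 * a + (1 - l) ^ 2 * b = l * (l * a) + (1 - l) * ((1 - l) * b) := by ring
  have step2 : h (l ^ 2 * a + (1 - l) ^ 2 * b)
      ≤ ENNReal.ofReal l * h (l * a) + ENNReal.ofReal (1 - l) * h ((1 - l) * b) := by
    rw [heq]
    exact hconvex _ _ (by positivity) (by positivity) l ⟨hl0.le, hl1.le⟩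
  have key : ∀ t : ℝ, 0 < t → t < 1 → ∀ x : ℝ, 0 < x →
      ENNReal.ofReal t * h (t * x) ≤ h x := by
    intro t ht0 ht1 x hx
    calc ENNReal.ofReal t * h (t * x)
        ≤ ENNReal.ofReal t * (ENNReal.ofReal (t ^ (-r)) * h x) :=
          mul_le_mul_right (hscale t ⟨ht0, ht1⟩ x hx) _
      _ = ENNReal.ofReal (t * t ^ (-r)) * h x := by
          rw [ENNReal.ofReal_mul ht0.le, mul_assoc]
      _ ≤ 1 * h x := by
          apply mul_le_mul_left
          rw [ENNReal.ofReal_le_one]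
          have : t * t ^ (-r) = t ^ (1 - r) := by
            rw [sub_eq_add_neg, Real.rpow_add ht0, Real.rpow_one]
          rw [this]
          exact Real.rpow_le_one ht0.le ht1.le (by linarith)
      _ = h x := one_mul _
  calc h (l ^ 2 * a + (1 - l) ^ 2 * b
        + l * (1 - l) * Matrix.trace ((cof (1 + ξ))ᵀ * (1 + ζ)))
      ≤ ENNReal.ofReal l * h (l * a) + ENNReal.ofReal (1 - l) * h ((1 - l) * b) :=
        step1.trans step2
    _ ≤ h a + h b := add_le_add (key l hl0 hl1 a ha) (key (1 - l) hl1' (by linarith) b hb)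
end

section
/- Let 𝔾 ⊂ M^{2×2} satisfy det(I+ξ) > 0 and tr(I+ξ) > 0 for all ξ ∈ 𝔾 (the latter following from tr(cof(I+ξ)^T I) > 0), and suppose t𝔾 ⊂ 𝔾 for t ∈ (0,1). Let h : (0,∞) → [0,∞] be convex, nonincreasing with h(λx) ≤ λ^{−r}h(x) for λ ∈ (0,1) and some r ≤ 1, and set g(ξ) = h(det(I+ξ)) on 𝔾, ∞ elsewhere. Then for every ξ ∈ 𝔾 and t ∈ (0,1), g(tξ) − g(ξ) ≤ ((1 − t^{2r})/t^{2r})(1 + g(ξ)); hence g is ru-usc with a ≡ 1. -/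
/-! Expanding the 2×2 determinant, `det(1 + tξ) = t² det(1 + ξ) + (1 - t)² + t(1 - t) tr(1 + ξ)`,
so positivity of the trace gives `det(1 + tξ) ≥ t² det(1 + ξ)`. As `h` is nonincreasing with
`h(t² x) ≤ t^{-2r} h(x)`, this yields `g(tξ) ≤ t^{-2r} g(ξ)`, and writing
`t^{-2r} = 1 + (1 - t^{2r}) / t^{2r}` gives the bound; its coefficient tends to `0` as `t → 1⁻`. -/

open Matrix ENNReal Filter
open scoped Classical

theorem det_one_add_smul_fin_two (t : ℝ) (ξ : Matrix (Fin 2) (Fin 2) ℝ) :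
    (1 + t • ξ).det = t ^ 2 * (1 + ξ).det + (1 - t) ^ 2 + t * (1 - t) * (1 + ξ).trace := by
  simp [det_fin_two, trace_fin_two]
  ring

theorem sq_mul_det_le_det_one_add_smul {ξ : Matrix (Fin 2) (Fin 2) ℝ}
    (htr : 0 ≤ (1 + ξ).trace) {t : ℝ} (ht₀ : 0 ≤ t) (ht₁ : t ≤ 1) :
    t ^ 2 * (1 + ξ).det ≤ (1 + t • ξ).det := by
  rw [det_one_add_smul_fin_two]
  have : 0 ≤ t * (1 - t) * (1 + ξ).trace := by
    have : 0 ≤ 1 - t := by linarith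
    positivity
  nlinarith [sq_nonneg (1 - t)]

theorem ENNReal.tsub_le_ofReal_div_mul_one_add {a b : ℝ≥0∞} {s : ℝ} (hs : 0 < s)
    (h : a ≤ ENNReal.ofReal s⁻¹ * b) : a - b ≤ ENNReal.ofReal ((1 - s) / s) * (1 + b) := by
  set c := ENNReal.ofReal ((1 - s) / s)
  -- also valid for `s > 1`, where `c = 0` because `ofReal` truncates negative numbers
  have hinv : ENNReal.ofReal s⁻¹ ≤ 1 + c := by
    have : s⁻¹ = 1 + (1 - s) / s := by field_simp; ring
    rw [this]
    exact ofReal_add_le.trans_eq (by rw [ofReal_one])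
  rw [tsub_le_iff_right]
  calc a ≤ (1 + c) * b := h.trans (by gcongr)
    _ = c * b + b := by ring
    _ ≤ c * (1 + b) + b := by gcongr; exact le_add_self

theorem EReal.sub_div_one_add_le {a b c : ℝ≥0∞} (hb : b ≠ ⊤) (h : a - b ≤ c * (1 + b)) :
    ((a : EReal) - b) / (1 + b) ≤ c := by
  have hpos : (0 : EReal) < 1 + b := by
    rw [← EReal.coe_ennreal_one, ← EReal.coe_ennreal_add, EReal.coe_ennreal_pos]
    exact zero_lt_one.trans_le le_self_add
  have hfin : (1 : EReal) + b ≠ ⊤ := by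
    rw [← EReal.coe_ennreal_one, ← EReal.coe_ennreal_add, Ne, EReal.coe_ennreal_eq_top_iff]
    exact ENNReal.add_ne_top.2 ⟨one_ne_top, hb⟩
  rw [EReal.div_le_iff_le_mul hpos hfin, EReal.sub_le_iff_le_add (.inl (by simp))
    (.inl (by simpa [EReal.coe_ennreal_eq_top_iff] using hb))]
  have := EReal.coe_ennreal_le_coe_ennreal_iff.2 (tsub_le_iff_right.1 h)
  simpa [mul_comm] using this

theorem tendsto_ofReal_one_sub_rpow_div_rpow (p : ℝ) :
    Tendsto (fun t : ℝ => ((ENNReal.ofReal ((1 - t ^ p) / t ^ p) : ℝ≥0∞) : EReal))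
      (nhdsWithin 1 (Set.Iio 1)) (nhds 0) := by
  have hp : ContinuousAt (fun t : ℝ => t ^ p) 1 :=
    Real.continuousAt_rpow_const 1 p (.inl one_ne_zero)
  have hc : ContinuousAt
      (fun t : ℝ => ((ENNReal.ofReal ((1 - t ^ p) / t ^ p) : ℝ≥0∞) : EReal)) 1 :=
    continuous_coe_ennreal_ereal.continuousAt.comp
      (ENNReal.continuous_ofReal.continuousAt.comp
        ((continuousAt_const.sub hp).div hp (by simp)))
  simpa using hc.continuousWithinAt.tendsto

theorem le_ofReal_inv_rpow_mul_of_sq_mul_le {h : ℝ → ℝ≥0∞}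
    (hmono : ∀ x y : ℝ, 0 < x → x ≤ y → h y ≤ h x) {r : ℝ}
    (hscale : ∀ l ∈ Set.Ioo (0:ℝ) 1, ∀ x : ℝ, 0 < x →
      h (l * x) ≤ ENNReal.ofReal (l ^ (-r)) * h x)
    {t x y : ℝ} (ht : t ∈ Set.Ioo (0:ℝ) 1) (hx : 0 < x) (hxy : t ^ 2 * x ≤ y) :
    h y ≤ ENNReal.ofReal (t ^ (2 * r))⁻¹ * h x := by
  obtain ⟨ht₀, ht₁⟩ := ht
  have hsq : (t ^ 2) ^ (-r) = (t ^ (2 * r))⁻¹ := by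
    rw [← Real.rpow_natCast, ← Real.rpow_mul ht₀.le, ← Real.rpow_neg ht₀.le]
    norm_num
  calc h y ≤ h (t ^ 2 * x) := hmono _ _ (by positivity) hxy
    _ ≤ ENNReal.ofReal ((t ^ 2) ^ (-r)) * h x :=
      hscale _ ⟨by positivity, pow_lt_one₀ ht₀.le ht₁ two_ne_zero⟩ x hx
    _ = ENNReal.ofReal (t ^ (2 * r))⁻¹ * h x := by rw [hsq]

theorem g_ru_usc_general (𝔾 : Set (Matrix (Fin 2) (Fin 2) ℝ))
    (hdet : ∀ ξ ∈ 𝔾, 0 < (1 + ξ).det)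
    (htr : ∀ ξ ∈ 𝔾, 0 < Matrix.trace (1 + ξ))
    (hstar : ∀ t ∈ Set.Ioo (0:ℝ) 1, ∀ ξ ∈ 𝔾, t • ξ ∈ 𝔾)
    (h : ℝ → ℝ≥0∞)
    (hmono : ∀ x y : ℝ, 0 < x → x ≤ y → h y ≤ h x)
    (r : ℝ)
    (hscale : ∀ l ∈ Set.Ioo (0:ℝ) 1, ∀ x : ℝ, 0 < x →
      h (l * x) ≤ ENNReal.ofReal (l ^ (-r)) * h x)
    (g : Matrix (Fin 2) (Fin 2) ℝ → ℝ≥0∞)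
    (hg : ∀ ξ, g ξ = if ξ ∈ 𝔾 then h ((1 + ξ).det) else ⊤) :
    (∀ ξ ∈ 𝔾, ∀ t ∈ Set.Ioo (0:ℝ) 1,
        g (t • ξ) - g ξ
          ≤ ENNReal.ofReal ((1 - t ^ (2 * r)) / t ^ (2 * r)) * (1 + g ξ)) ∧
      limsup (fun t : ℝ => ⨆ ξ ∈ {ξ : Matrix (Fin 2) (Fin 2) ℝ | g ξ < ⊤},
          ((g (t • ξ) : EReal) - (g ξ : EReal)) / ((1 : EReal) + (g ξ : EReal)))
        (nhdsWithin 1 (Set.Iio 1)) ≤ (0 : EReal) := by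
  have hg_mem : ∀ ξ ∈ 𝔾, g ξ = h (1 + ξ).det := fun ξ hξ => by rw [hg, if_pos hξ]
  have hmem_of_lt_top : ∀ ξ, g ξ < ⊤ → ξ ∈ 𝔾 := fun ξ hξ => by
    by_contra hξ𝔾
    rw [hg, if_neg hξ𝔾] at hξ
    exact hξ.ne rfl
  have bound : ∀ ξ ∈ 𝔾, ∀ t ∈ Set.Ioo (0:ℝ) 1,
      g (t • ξ) - g ξ ≤ ENNReal.ofReal ((1 - t ^ (2 * r)) / t ^ (2 * r)) * (1 + g ξ) := by
    intro ξ hξ t ht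
    refine ENNReal.tsub_le_ofReal_div_mul_one_add (Real.rpow_pos_of_pos ht.1 _) ?_
    rw [hg_mem _ (hstar t ht ξ hξ), hg_mem ξ hξ]
    exact le_ofReal_inv_rpow_mul_of_sq_mul_le hmono hscale ht (hdet ξ hξ)
      (sq_mul_det_le_det_one_add_smul (htr ξ hξ).le ht.1.le ht.2.le)
  refine ⟨bound, (limsup_le_limsup ?_).trans
    (tendsto_ofReal_one_sub_rpow_div_rpow (2 * r)).limsup_eq.le⟩
  filter_upwards [Ioo_mem_nhdsLT zero_lt_one] with t ht
  exact iSup₂_le fun ξ hξ =>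
    EReal.sub_div_one_add_le hξ.ne (bound ξ (hmem_of_lt_top ξ hξ) t ht)

/-- with `det(I+ξ) > 0`, `tr(I+ξ) > 0` on `𝔾`, `t𝔾 ⊂ 𝔾` for `t ∈ (0,1)`,
and `h` convex, nonincreasing with `h(λx) ≤ λ^{−r}h(x)` (`r ≤ 1`), the function
`g = h(det(I+·))` on `𝔾` (`∞` outside) satisfies
`g(tξ) − g(ξ) ≤ ((1−t^{2r})/t^{2r})(1+g(ξ))`; hence `g` is ru-usc with `a ≡ 1`. -/
theorem g_ru_usc (𝔾 : Set (Matrix (Fin 2) (Fin 2) ℝ))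
    (hdet : ∀ ξ ∈ 𝔾, 0 < (1 + ξ).det)
    (htr : ∀ ξ ∈ 𝔾, 0 < Matrix.trace (1 + ξ))
    (hstar : ∀ t ∈ Set.Ioo (0:ℝ) 1, ∀ ξ ∈ 𝔾, t • ξ ∈ 𝔾)
    (h : ℝ → ℝ≥0∞)
    (hconvex : ∀ x y : ℝ, 0 < x → 0 < y → ∀ l ∈ Set.Icc (0:ℝ) 1,
      h (l * x + (1 - l) * y) ≤ ENNReal.ofReal l * h x + ENNReal.ofReal (1 - l) * h y)
    (hmono : ∀ x y : ℝ, 0 < x → x ≤ y → h y ≤ h x)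
    (r : ℝ) (hr : r ≤ 1)
    (hscale : ∀ l ∈ Set.Ioo (0:ℝ) 1, ∀ x : ℝ, 0 < x →
      h (l * x) ≤ ENNReal.ofReal (l ^ (-r)) * h x)
    (g : Matrix (Fin 2) (Fin 2) ℝ → ℝ≥0∞)
    (hg : ∀ ξ, g ξ = if ξ ∈ 𝔾 then h ((1 + ξ).det) else ⊤) :
    (∀ ξ ∈ 𝔾, ∀ t ∈ Set.Ioo (0:ℝ) 1,
        g (t • ξ) - g ξ
          ≤ ENNReal.ofReal ((1 - t ^ (2 * r)) / t ^ (2 * r)) * (1 + g ξ)) ∧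
      limsup (fun t : ℝ => ⨆ ξ ∈ {ξ : Matrix (Fin 2) (Fin 2) ℝ | g ξ < ⊤},
          ((g (t • ξ) : EReal) - (g ξ : EReal)) / ((1 : EReal) + (g ξ : EReal)))
        (nhdsWithin 1 (Set.Iio 1)) ≤ (0 : EReal) :=
  g_ru_usc_general 𝔾 hdet htr hstar h hmono r hscale g hg
end
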